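/- arXiv:1305.2206 — 6 statements merged into one kernel-verified Lean document; each statement's English description precedes it below -/
import Mathlib

section
/- For all natural numbers a and c, the number of paths P ∈ P(T,B) with b(P) = a and ℓ(P) = c equals the number of paths P ∈ P(T,B) with t(P) = a and r(P) = c. (The pairs of statistics (b,ℓ) and (t,r) have the same joint distribution over P(T,B).) -/
/-- A path `P` lies in `P(T,B)`: it is weakly increasing (monotone) and lies
weakly between the boundaries `B` and `T`. -/
def InP {x y : ℕ} (T B P : Fin x → Fin (y+1)) : Prop :=
  Monotone P ∧ ∀ j, B j ≤ P j ∧ P j ≤ T j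

/-- The number of east steps of `P` shared with the path `Q` (contacts with `Q`). -/
noncomputable def ccount {x y : ℕ} (Q P : Fin x → Fin (y+1)) : ℕ :=
  Nat.card {j : Fin x // P j = Q j}

/-- `gstat P i` is the x-coordinate of the `i`-th north step of the path `P`,
namely the number of east steps of `P` of height at most `i`. -/
noncomputable def gstat {x y : ℕ} (P : Fin x → Fin (y+1)) (i : Fin y) : ℕ :=
  Nat.card {j : Fin x // (P j : ℕ) ≤ (i : ℕ)}

/-- The number of north steps of `P` shared with the path `Q`. -/
noncomputable def ncount {x y : ℕ} (Q P : Fin x → Fin (y+1)) : ℕ :=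
  Nat.card {i : Fin y // gstat P i = gstat Q i}

open Finset MvPolynomial

namespace ER

noncomputable def u : MvPolynomial (Fin 2) ℤ := X 0
noncomputable def v : MvPolynomial (Fin 2) ℤ := X 1

variable {n : ℕ}

/-- number of indices where `P` agrees with `Q`. -/
def bc (Q P : Fin n → ℕ) : ℕ := ∑ j, if P j = Q j then 1 else 0

/-- the set of levels covered by the intervals `[A j, C j)`. -/
def cov (A C : Fin n → ℕ) : Finset ℕ := Finset.univ.biUnion fun j => Finset.Ico (A j) (C j)

open scoped Classical in
noncomputable def pathsF (T B : Fin n → ℕ) : Finset (Fin n → ℕ) :=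
  (Fintype.piFinset fun j => Finset.Icc (B j) (T j)).filter Monotone

noncomputable def DD (T B : Fin n → ℕ) : MvPolynomial (Fin 2) ℤ :=
  ∑ P ∈ pathsF T B, u ^ bc B P * v ^ (cov P T).card

noncomputable def GG (T B : Fin n → ℕ) : MvPolynomial (Fin 2) ℤ :=
  ∑ P ∈ pathsF T B, u ^ bc T P * v ^ (cov B P).card

lemma mem_pathsF {T B P : Fin n → ℕ} :
    P ∈ pathsF T B ↔ Monotone P ∧ ∀ j, B j ≤ P j ∧ P j ≤ T j := by
  classical
  simp only [pathsF, Finset.mem_filter, Fintype.mem_piFinset, Finset.mem_Icc]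
  tauto

lemma monotone_snoc_iff {Q : Fin n → ℕ} {h : ℕ} :
    Monotone (Fin.snoc Q h : Fin (n+1) → ℕ) ↔ Monotone Q ∧ ∀ j, Q j ≤ h := by
  constructor
  · intro H
    constructor
    · intro a b hab
      have := H (a := a.castSucc) (b := b.castSucc) (by simpa using hab)
      simpa using this
    · intro j
      have := H (a := j.castSucc) (b := Fin.last n) (Fin.le_last _)
      simpa using this
  · rintro ⟨hQ, hle⟩
    intro a b hab
    rcases Fin.eq_castSucc_or_eq_last b with ⟨b', rfl⟩ | rfl
    · rcases Fin.eq_castSucc_or_eq_last a with ⟨a', rfl⟩ | rfl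
      · simpa using hQ (by simpa using hab)
      · have : b'.castSucc = Fin.last n := le_antisymm (Fin.le_last _) hab
        simp [this]
    · rcases Fin.eq_castSucc_or_eq_last a with ⟨a', rfl⟩ | rfl
      · simpa using hle a'
      · simp

lemma monotone_cons_iff {Q : Fin n → ℕ} {m : ℕ} :
    Monotone (Fin.cons m Q : Fin (n+1) → ℕ) ↔ Monotone Q ∧ ∀ j, m ≤ Q j := by
  constructor
  · intro H
    constructor
    · intro a b hab
      have := H (a := a.succ) (b := b.succ) (by simpa using hab)
      simpa using this
    · intro j
      have := H (a := 0) (b := j.succ) (Fin.zero_le _)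
      simpa using this
  · rintro ⟨hQ, hle⟩
    intro a b hab
    rcases Fin.eq_zero_or_eq_succ b with rfl | ⟨b', rfl⟩
    · have : a = 0 := le_antisymm (by simpa using hab) (Fin.zero_le _)
      simp [this]
    · rcases Fin.eq_zero_or_eq_succ a with rfl | ⟨a', rfl⟩
      · simpa using hle b'
      · simpa using hQ (by simpa using hab)

lemma sum_pathsF_snoc {M : Type*} [AddCommMonoid M] (T B : Fin (n+1) → ℕ)
    (f : (Fin (n+1) → ℕ) → M) :
    ∑ P ∈ pathsF T B, f P
      = ∑ h ∈ Icc (B (Fin.last n)) (T (Fin.last n)),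
          ∑ Q ∈ pathsF (fun j => min (T j.castSucc) h) (fun j => B j.castSucc),
            f (Fin.snoc Q h) := by
  rw [Finset.sum_sigma']
  apply Finset.sum_nbij' (i := fun P => (⟨P (Fin.last n), Fin.init P⟩ :
      (_ : ℕ) × (Fin n → ℕ))) (j := fun q => Fin.snoc q.2 q.1)
  · intro P hP
    rw [mem_pathsF] at hP
    obtain ⟨hmono, hb⟩ := hP
    refine Finset.mem_sigma.2 ⟨?_, ?_⟩
    · rw [Finset.mem_Icc]
      exact (hb (Fin.last n))
    · rw [mem_pathsF]
      refine ⟨fun a b hab => hmono (by simpa using hab), fun j => ⟨(hb j.castSucc).1, ?_⟩⟩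
      exact le_min (hb j.castSucc).2 (hmono (Fin.le_last j.castSucc))
  · intro q hq
    obtain ⟨hh, hQ⟩ := Finset.mem_sigma.1 hq
    rw [Finset.mem_Icc] at hh
    rw [mem_pathsF] at hQ
    obtain ⟨hmono, hb⟩ := hQ
    rw [mem_pathsF]
    refine ⟨monotone_snoc_iff.2 ⟨hmono, fun j => le_trans (hb j).2 (min_le_right _ _)⟩, ?_⟩
    intro j
    rcases Fin.eq_castSucc_or_eq_last j with ⟨j', rfl⟩ | rfl
    · simpa using ⟨(hb j').1, le_trans (hb j').2 (min_le_left _ _)⟩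
    · simpa using hh
  · intro P _
    exact Fin.snoc_init_self P
  · intro q hq
    ext
    · simp
    · simp
  · intro P _
    rw [Fin.snoc_init_self]

lemma sum_pathsF_cons {M : Type*} [AddCommMonoid M] (T B : Fin (n+1) → ℕ)
    (f : (Fin (n+1) → ℕ) → M) :
    ∑ P ∈ pathsF T B, f P
      = ∑ m ∈ Icc (B 0) (T 0),
          ∑ Q ∈ pathsF (fun j => T j.succ) (fun j => max (B j.succ) m), f (Fin.cons m Q) := by
  rw [Finset.sum_sigma']
  apply Finset.sum_nbij' (i := fun P => (⟨P 0, Fin.tail P⟩ : (_ : ℕ) × (Fin n → ℕ)))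
    (j := fun q => Fin.cons q.1 q.2)
  · intro P hP
    rw [mem_pathsF] at hP
    obtain ⟨hmono, hb⟩ := hP
    refine Finset.mem_sigma.2 ⟨?_, ?_⟩
    · rw [Finset.mem_Icc]; exact hb 0
    · rw [mem_pathsF]
      refine ⟨fun a b hab => hmono (by simpa using hab), fun j =>
        ⟨max_le (hb j.succ).1 (hmono (Fin.zero_le _)), (hb j.succ).2⟩⟩
  · intro q hq
    obtain ⟨hh, hQ⟩ := Finset.mem_sigma.1 hq
    rw [Finset.mem_Icc] at hh
    rw [mem_pathsF] at hQ
    obtain ⟨hmono, hb⟩ := hQ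
    rw [mem_pathsF]
    refine ⟨monotone_cons_iff.2 ⟨hmono, fun j => le_trans (le_max_right _ _) (hb j).1⟩, ?_⟩
    intro j
    rcases Fin.eq_zero_or_eq_succ j with rfl | ⟨j', rfl⟩
    · simpa using hh
    · simpa using ⟨le_trans (le_max_left _ _) (hb j').1, (hb j').2⟩
  · intro P _
    exact Fin.cons_self_tail P
  · intro q hq
    ext
    · simp
    · simp
  · intro P _
    rw [Fin.cons_self_tail]

lemma bc_snoc (B : Fin (n+1) → ℕ) (Q : Fin n → ℕ) (h : ℕ) :
    bc B (Fin.snoc Q h) = bc (fun j => B j.castSucc) Q + (if h = B (Fin.last n) then 1 else 0) := by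
  unfold bc
  rw [Fin.sum_univ_castSucc]
  simp

lemma bc_cons (T : Fin (n+1) → ℕ) (Q : Fin n → ℕ) (m : ℕ) :
    bc T (Fin.cons m Q) = bc (fun j => T j.succ) Q + (if m = T 0 then 1 else 0) := by
  unfold bc
  rw [Fin.sum_univ_succ]
  simp [add_comm]

lemma cov_snoc (T : Fin (n+1) → ℕ) (Q : Fin n → ℕ) (h : ℕ)
    (hT : ∀ j : Fin n, T j.castSucc ≤ T (Fin.last n)) :
    cov (Fin.snoc Q h) T
      = cov Q (fun j => min (T j.castSucc) h) ∪ Finset.Ico h (T (Fin.last n)) := by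
  unfold cov
  ext i
  simp only [Finset.mem_biUnion, Finset.mem_union, Finset.mem_Ico, Finset.mem_univ,
    true_and]
  constructor
  · rintro ⟨j, hj⟩
    rcases Fin.eq_castSucc_or_eq_last j with ⟨j', rfl⟩ | rfl
    · rw [Fin.snoc_castSucc] at hj
      rcases lt_or_ge i (min (T j'.castSucc) h) with hlt | hge
      · exact Or.inl ⟨j', hj.1, hlt⟩
      · right
        have h1 : h ≤ i := by
          rcases min_cases (T j'.castSucc) h with ⟨he, hle⟩ | ⟨he, hle⟩ <;> omega
        exact ⟨h1, lt_of_lt_of_le hj.2 (hT j')⟩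
    · rw [Fin.snoc_last] at hj
      exact Or.inr hj
  · rintro (⟨j, hj⟩ | hj)
    · exact ⟨j.castSucc,
        by rw [Fin.snoc_castSucc]; exact ⟨hj.1, lt_of_lt_of_le hj.2 (min_le_left _ _)⟩⟩
    · exact ⟨Fin.last n, by rw [Fin.snoc_last]; exact hj⟩

lemma cov_snoc_card (T : Fin (n+1) → ℕ) (Q : Fin n → ℕ) (h : ℕ)
    (hT : ∀ j : Fin n, T j.castSucc ≤ T (Fin.last n)) :
    (cov (Fin.snoc Q h) T).card
      = (cov Q (fun j => min (T j.castSucc) h)).card + (T (Fin.last n) - h) := by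
  rw [cov_snoc T Q h hT, Finset.card_union_of_disjoint, Nat.card_Ico]
  rw [Finset.disjoint_left]
  intro i hi hi'
  simp only [cov, Finset.mem_biUnion, Finset.mem_Ico, Finset.mem_univ, true_and] at hi hi'
  obtain ⟨j, hj⟩ := hi
  have := min_le_right (T j.castSucc) h
  omega

lemma cov_cons (B : Fin (n+1) → ℕ) (Q : Fin n → ℕ) (m : ℕ)
    (hB : ∀ j : Fin n, B 0 ≤ B j.succ) :
    cov B (Fin.cons m Q)
      = cov (fun j => max (B j.succ) m) Q ∪ Finset.Ico (B 0) m := by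
  unfold cov
  ext i
  simp only [Finset.mem_biUnion, Finset.mem_union, Finset.mem_Ico, Finset.mem_univ,
    true_and]
  constructor
  · rintro ⟨j, hj⟩
    rcases Fin.eq_zero_or_eq_succ j with rfl | ⟨j', rfl⟩
    · rw [Fin.cons_zero] at hj
      exact Or.inr hj
    · rw [Fin.cons_succ] at hj
      rcases le_or_gt (max (B j'.succ) m) i with hge | hlt
      · exact Or.inl ⟨j', hge, hj.2⟩
      · right
        have h1 : i < m := by
          rcases max_cases (B j'.succ) m with ⟨he, hle⟩ | ⟨he, hle⟩ <;> omega
        exact ⟨le_trans (hB j') hj.1, h1⟩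
  · rintro (⟨j, hj⟩ | hj)
    · exact ⟨j.succ, by rw [Fin.cons_succ]; exact ⟨le_trans (le_max_left _ _) hj.1, hj.2⟩⟩
    · exact ⟨0, by rw [Fin.cons_zero]; exact hj⟩

lemma cov_cons_card (B : Fin (n+1) → ℕ) (Q : Fin n → ℕ) (m : ℕ)
    (hB : ∀ j : Fin n, B 0 ≤ B j.succ) :
    (cov B (Fin.cons m Q)).card
      = (cov (fun j => max (B j.succ) m) Q).card + (m - B 0) := by
  rw [cov_cons B Q m hB, Finset.card_union_of_disjoint, Nat.card_Ico]
  rw [Finset.disjoint_left]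
  intro i hi hi'
  simp only [cov, Finset.mem_biUnion, Finset.mem_Ico, Finset.mem_univ, true_and] at hi hi'
  obtain ⟨j, hj⟩ := hi
  have := le_max_right (B j.succ) m
  omega

lemma DD_snoc (T B : Fin (n+1) → ℕ) (hT : Monotone T) :
    DD T B = ∑ h ∈ Icc (B (Fin.last n)) (T (Fin.last n)),
      u ^ (if h = B (Fin.last n) then 1 else 0) * v ^ (T (Fin.last n) - h) *
        DD (fun j => min (T j.castSucc) h) (fun j => B j.castSucc) := by
  unfold DD
  rw [sum_pathsF_snoc]
  refine Finset.sum_congr rfl fun h hh => ?_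
  rw [Finset.mul_sum]
  refine Finset.sum_congr rfl fun Q hQ => ?_
  rw [bc_snoc, cov_snoc_card T Q h (fun j => hT (Fin.le_last _))]
  ring

lemma GG_cons (T B : Fin (n+1) → ℕ) (hB : Monotone B) :
    GG T B = ∑ m ∈ Icc (B 0) (T 0),
      u ^ (if m = T 0 then 1 else 0) * v ^ (m - B 0) *
        GG (fun j => T j.succ) (fun j => max (B j.succ) m) := by
  unfold GG
  rw [sum_pathsF_cons]
  refine Finset.sum_congr rfl fun m hm => ?_
  rw [Finset.mul_sum]
  refine Finset.sum_congr rfl fun Q hQ => ?_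
  rw [bc_cons, cov_cons_card B Q m (fun j => hB (Fin.zero_le _))]
  ring

lemma pathsF_nil (T B : Fin 0 → ℕ) : pathsF T B = {fun j => j.elim0} := by
  apply Finset.eq_singleton_iff_unique_mem.2
  constructor
  · rw [mem_pathsF]
    exact ⟨fun a => a.elim0, fun j => j.elim0⟩
  · intro P _
    funext j
    exact j.elim0

lemma DD_nil (T B : Fin 0 → ℕ) : DD T B = 1 := by
  rw [DD, pathsF_nil, Finset.sum_singleton]
  have : cov (fun j : Fin 0 => j.elim0) T = ∅ := by ext i; simp [cov]
  simp [bc, this]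

lemma GG_nil (T B : Fin 0 → ℕ) : GG T B = 1 := by
  rw [GG, pathsF_nil, Finset.sum_singleton]
  have : cov B (fun j : Fin 0 => j.elim0) = ∅ := by ext i; simp [cov]
  simp [bc, this]

lemma pathsF_const (C : Fin n → ℕ) (hC : Monotone C) : pathsF C C = {C} := by
  apply Finset.eq_singleton_iff_unique_mem.2
  constructor
  · rw [mem_pathsF]
    exact ⟨hC, fun j => ⟨le_rfl, le_rfl⟩⟩
  · intro P hP
    rw [mem_pathsF] at hP
    funext j
    exact le_antisymm (hP.2 j).2 (hP.2 j).1

lemma GG_const (s : ℕ) : GG (fun _ : Fin n => s) (fun _ => s) = u ^ n := by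
  rw [GG, pathsF_const _ monotone_const, Finset.sum_singleton]
  have : cov (fun _ : Fin n => s) (fun _ : Fin n => s) = ∅ := by ext i; simp [cov]
  simp [bc, this]

lemma mono_collect (k a b c d a' b' c' d' : ℕ) (hu : a + b = a' + b') (hv : c + d = c' + d') :
    u^a * v^c * (u^b * v^d * u^k) = u^a' * v^c' * (u^b' * v^d' * u^k) := by
  have l : ∀ a b c d : ℕ, u^a * v^c * (u^b * v^d * u^k) = u^(a+b+k) * v^(c+d) := by
    intros a b c d
    rw [pow_add, pow_add, pow_add]
    ring
  rw [l, l, hu, hv]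

theorem DG : ∀ (k : ℕ) (T B : Fin k → ℕ), Monotone T → Monotone B →
    (∀ j, B j ≤ T j) → DD T B = GG T B := by
  intro k
  induction k using Nat.strong_induction_on with
  | _ k IH =>
  match k with
  | 0 =>
    intro T B _ _ _
    rw [DD_nil, GG_nil]
  | 1 =>
    intro T B hT hB hBT
    rw [DD_snoc T B hT, GG_cons T B hB]
    have hlz : Fin.last 0 = (0 : Fin 1) := rfl
    rw [hlz]
    simp only [DD_nil, GG_nil, mul_one]
    apply Finset.sum_nbij' (i := fun h => B 0 + T 0 - h) (j := fun m => B 0 + T 0 - m)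
    · intro a ha; rw [Finset.mem_Icc] at *; omega
    · intro a ha; rw [Finset.mem_Icc] at *; omega
    · intro a ha; rw [Finset.mem_Icc] at ha; omega
    · intro a ha; rw [Finset.mem_Icc] at ha; omega
    · intro a ha
      rw [Finset.mem_Icc] at ha
      have e1 : (if a = B 0 then 1 else 0) = (if B 0 + T 0 - a = T 0 then 1 else 0) := by
        split_ifs <;> omega
      have e2 : T 0 - a = B 0 + T 0 - a - B 0 := by omega
      rw [e1, e2]
  | (n+2) =>
    intro T B hT hB hBT
    have hB0l : B 0 ≤ B (Fin.last (n+1)) := hB (Fin.zero_le _)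
    have hT0l : T 0 ≤ T (Fin.last (n+1)) := hT (Fin.zero_le _)
    have L1 : DD T B = ∑ h ∈ Icc (B (Fin.last (n+1))) (T (Fin.last (n+1))),
        ∑ m ∈ Icc (B 0) (min (T 0) h),
          u ^ (if h = B (Fin.last (n+1)) then 1 else 0) * v ^ (T (Fin.last (n+1)) - h) *
          (u ^ (if m = min (T 0) h then 1 else 0) * v ^ (m - B 0) *
            GG (fun j : Fin n => min (T j.succ.castSucc) h)
               (fun j : Fin n => max (B j.succ.castSucc) m)) := by
      rw [DD_snoc T B hT]
      refine Finset.sum_congr rfl fun h hh => ?_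
      rw [Finset.mem_Icc] at hh
      have hmT : Monotone (fun j : Fin (n+1) => min (T j.castSucc) h) :=
        fun a b hab => min_le_min (hT (Fin.castSucc_le_castSucc_iff.2 hab)) le_rfl
      have hmB : Monotone (fun j : Fin (n+1) => B j.castSucc) :=
        fun a b hab => hB (Fin.castSucc_le_castSucc_iff.2 hab)
      have hle : ∀ j : Fin (n+1), B j.castSucc ≤ min (T j.castSucc) h :=
        fun j => le_min (hBT _) (le_trans (hB (Fin.le_last _)) hh.1)
      rw [IH (n+1) (by omega) _ _ hmT hmB hle, GG_cons _ _ hmB, Finset.mul_sum]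
      simp only [Fin.castSucc_zero]
      rfl
    have R1 : GG T B = ∑ m ∈ Icc (B 0) (T 0),
        ∑ h ∈ Icc (max (B (Fin.last (n+1))) m) (T (Fin.last (n+1))),
          u ^ (if m = T 0 then 1 else 0) * v ^ (m - B 0) *
          (u ^ (if h = max (B (Fin.last (n+1))) m then 1 else 0) *
            v ^ (T (Fin.last (n+1)) - h) *
            GG (fun j : Fin n => min (T j.succ.castSucc) h)
               (fun j : Fin n => max (B j.succ.castSucc) m)) := by
      rw [GG_cons T B hB]
      refine Finset.sum_congr rfl fun m hm => ?_
      rw [Finset.mem_Icc] at hm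
      have hmT : Monotone (fun j : Fin (n+1) => T j.succ) :=
        fun a b hab => hT (Fin.succ_le_succ_iff.2 hab)
      have hmB : Monotone (fun j : Fin (n+1) => max (B j.succ) m) :=
        fun a b hab => max_le_max (hB (Fin.succ_le_succ_iff.2 hab)) le_rfl
      have hle : ∀ j : Fin (n+1), max (B j.succ) m ≤ T j.succ :=
        fun j => max_le (hBT _) (le_trans hm.2 (hT (Fin.zero_le _)))
      rw [← IH (n+1) (by omega) _ _ hmT hmB hle, DD_snoc _ _ hmT, Finset.mul_sum]
      simp only [Fin.succ_last]
      refine Finset.sum_congr rfl fun h hh => ?_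
      rw [Finset.mem_Icc] at hh
      have hmT2 : Monotone (fun j : Fin n => min (T j.castSucc.succ) h) :=
        fun a b hab => min_le_min (hT (by simp [Fin.succ_le_succ_iff, Fin.castSucc_le_castSucc_iff, hab])) le_rfl
      have hmB2 : Monotone (fun j : Fin n => max (B j.castSucc.succ) m) :=
        fun a b hab => max_le_max (hB (by simp [Fin.succ_le_succ_iff, Fin.castSucc_le_castSucc_iff, hab])) le_rfl
      have hle2 : ∀ j : Fin n, max (B j.castSucc.succ) m ≤ min (T j.castSucc.succ) h := by
        intro j
        apply max_le
        · apply le_min (hBT _)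
          exact le_trans (le_trans (hB (Fin.le_last _)) (le_max_left _ m)) hh.1
        · apply le_min (le_trans hm.2 (hT (Fin.zero_le _)))
          exact le_trans (le_max_right (B (Fin.last (n+1))) m) hh.1
      rw [IH n (by omega) _ _ hmT2 hmB2 hle2]
      simp only [Fin.succ_castSucc]
    rw [L1, R1]
    have hicc1 : ∀ h : ℕ, Icc (B 0) (min (T 0) h) = (Icc (B 0) (T 0)).filter (fun m => m ≤ h) := by
      intro h; ext z; simp only [Finset.mem_Icc, Finset.mem_filter]; omega
    have hicc2 : ∀ m : ℕ, Icc (max (B (Fin.last (n+1))) m) (T (Fin.last (n+1)))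
        = (Icc (B (Fin.last (n+1))) (T (Fin.last (n+1)))).filter (fun h => m ≤ h) := by
      intro m; ext z; simp only [Finset.mem_Icc, Finset.mem_filter]; omega
    simp only [hicc1, hicc2, Finset.sum_filter]
    rw [Finset.sum_comm]
    rw [← Finset.sum_product', ← Finset.sum_product']
    apply Finset.sum_nbij'
      (i := fun p : ℕ × ℕ => if p.1 = p.2 then
        (B (Fin.last (n+1)) + T 0 - p.1, B (Fin.last (n+1)) + T 0 - p.2) else p)
      (j := fun p : ℕ × ℕ => if p.1 = p.2 then
        (B (Fin.last (n+1)) + T 0 - p.1, B (Fin.last (n+1)) + T 0 - p.2) else p)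
    · rintro ⟨m, h⟩ hp
      simp only [Finset.mem_product, Finset.mem_Icc] at hp
      by_cases hd : m = h
      · subst hd
        rw [if_pos rfl]
        simp only [Finset.mem_product, Finset.mem_Icc]
        omega
      · rw [if_neg hd]
        simp only [Finset.mem_product, Finset.mem_Icc]
        omega
    · rintro ⟨m, h⟩ hp
      simp only [Finset.mem_product, Finset.mem_Icc] at hp
      by_cases hd : m = h
      · subst hd
        rw [if_pos rfl]
        simp only [Finset.mem_product, Finset.mem_Icc]
        omega
      · rw [if_neg hd]
        simp only [Finset.mem_product, Finset.mem_Icc]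
        omega
    · rintro ⟨m, h⟩ hp
      simp only [Finset.mem_product, Finset.mem_Icc] at hp
      by_cases hd : m = h
      · subst hd
        rw [if_pos rfl, if_pos rfl]
        simp only [Prod.mk.injEq]
        omega
      · rw [if_neg hd, if_neg hd]
    · rintro ⟨m, h⟩ hp
      simp only [Finset.mem_product, Finset.mem_Icc] at hp
      by_cases hd : m = h
      · subst hd
        rw [if_pos rfl, if_pos rfl]
        simp only [Prod.mk.injEq]
        omega
      · rw [if_neg hd, if_neg hd]
    · rintro ⟨m, h⟩ hp
      simp only [Finset.mem_product, Finset.mem_Icc] at hp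
      by_cases hd : m = h
      · subst hd
        rw [if_pos rfl, if_pos le_rfl]
        set σ := B (Fin.last (n+1)) + T 0 - m with hσ
        rw [if_pos le_rfl]
        have hsm : B (Fin.last (n+1)) ≤ m ∧ m ≤ T 0 := ⟨hp.2.1, hp.1.2⟩
        have hσb : B (Fin.last (n+1)) ≤ σ ∧ σ ≤ T 0 := by omega
        have hMT1 : (fun j : Fin n => min (T j.succ.castSucc) m) = fun _ => m :=
          funext fun j => min_eq_right (le_trans hsm.2 (hT (Fin.zero_le _)))
        have hMB1 : (fun j : Fin n => max (B j.succ.castSucc) m) = fun _ => m :=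
          funext fun j => max_eq_right (le_trans (hB (Fin.le_last _)) hsm.1)
        have hMT2 : (fun j : Fin n => min (T j.succ.castSucc) σ) = fun _ => σ :=
          funext fun j => min_eq_right (le_trans hσb.2 (hT (Fin.zero_le _)))
        have hMB2 : (fun j : Fin n => max (B j.succ.castSucc) σ) = fun _ => σ :=
          funext fun j => max_eq_right (le_trans (hB (Fin.le_last _)) hσb.1)
        rw [hMT1, hMB1, hMT2, hMB2, GG_const, GG_const]
        dsimp only
        apply mono_collect
        · split_ifs <;> omega
        · omega
      · rw [if_neg hd]
        by_cases hle : m ≤ h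
        · rw [if_pos hle, if_pos hle]
          have hlt : m < h := lt_of_le_of_ne hle hd
          have eA : (if h = B (Fin.last (n+1)) then 1 else 0)
              = (if h = max (B (Fin.last (n+1))) m then 1 else 0) := by
            split_ifs <;> omega
          have eB : (if m = min (T 0) h then 1 else 0) = (if m = T 0 then 1 else 0) := by
            split_ifs <;> omega
          rw [eA, eB]
          ring
        · rw [if_neg hle, if_neg hle]

lemma ccount_eq {x y : ℕ} (Q P : Fin x → Fin (y+1)) :
    ccount Q P = bc (fun j => (Q j : ℕ)) (fun j => (P j : ℕ)) := by
  classical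
  rw [ccount, Nat.card_eq_fintype_card, Fintype.card_subtype, bc, Finset.card_filter]
  refine Finset.sum_congr rfl fun j _ => ?_
  congr 1
  rw [eq_iff_iff, Fin.val_eq_val]

lemma gstat_eq_iff {x y : ℕ} (L U : Fin x → Fin (y+1)) (hLU : ∀ j, L j ≤ U j) (i : Fin y) :
    gstat L i = gstat U i ↔ (i : ℕ) ∉ cov (fun j => (L j : ℕ)) (fun j => (U j : ℕ)) := by
  classical
  rw [gstat, gstat, Nat.card_eq_fintype_card, Nat.card_eq_fintype_card,
    Fintype.card_subtype, Fintype.card_subtype]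
  have hsub : (univ.filter fun j => (U j : ℕ) ≤ (i : ℕ))
      ⊆ (univ.filter fun j => (L j : ℕ) ≤ (i : ℕ)) := by
    intro j hj
    simp only [Finset.mem_filter, Finset.mem_univ, true_and] at hj ⊢
    exact le_trans (hLU j) hj
  constructor
  · intro hcard
    have : (univ.filter fun j => (L j : ℕ) ≤ (i : ℕ))
        = (univ.filter fun j => (U j : ℕ) ≤ (i : ℕ)) :=
      (Finset.eq_of_subset_of_card_le hsub (le_of_eq hcard)).symm
    intro hmem
    simp only [cov, Finset.mem_biUnion, Finset.mem_Ico, Finset.mem_univ, true_and] at hmem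
    obtain ⟨j, hj1, hj2⟩ := hmem
    have : j ∈ univ.filter fun j => (U j : ℕ) ≤ (i : ℕ) := by
      rw [← this]
      simp only [Finset.mem_filter, Finset.mem_univ, true_and]
      exact hj1
    simp only [Finset.mem_filter, Finset.mem_univ, true_and] at this
    omega
  · intro hmem
    congr 1
    apply Finset.Subset.antisymm _ hsub
    intro j hj
    simp only [Finset.mem_filter, Finset.mem_univ, true_and] at hj ⊢
    by_contra hcon
    exact hmem (by
      simp only [cov, Finset.mem_biUnion, Finset.mem_Ico, Finset.mem_univ, true_and]
      exact ⟨j, hj, by omega⟩)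

lemma card_filter_notmem {y : ℕ} (S : Finset ℕ) (hS : ∀ s ∈ S, s < y) :
    (univ.filter fun i : Fin y => (i : ℕ) ∉ S).card = y - S.card := by
  classical
  have h1 : (univ.filter fun i : Fin y => (i : ℕ) ∈ S).card = S.card := by
    refine Finset.card_bij (fun (i : Fin y) (_ : i ∈ univ.filter fun i : Fin y => (i : ℕ) ∈ S) => (i : ℕ)) ?_ ?_ ?_
    · intro i hi
      simp only [Finset.mem_filter] at hi
      exact hi.2
    · intro i hi j hj hij
      exact Fin.val_injective hij
    · intro s hs
      exact ⟨⟨s, hS s hs⟩, by simp [hs], rfl⟩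
  have h2 := Finset.card_filter_add_card_filter_not (s := (univ : Finset (Fin y)))
    (p := fun i : Fin y => (i : ℕ) ∈ S)
  simp only [Finset.card_univ, Fintype.card_fin] at h2
  omega

lemma cov_lt {x y : ℕ} (L U : Fin x → Fin (y+1)) :
    ∀ s ∈ cov (fun j => (L j : ℕ)) (fun j => (U j : ℕ)), s < y := by
  intro s hs
  simp only [cov, Finset.mem_biUnion, Finset.mem_Ico, Finset.mem_univ, true_and] at hs
  obtain ⟨j, _, h2⟩ := hs
  have := (U j).isLt
  omega

lemma ncount_aux {x y : ℕ} (L U : Fin x → Fin (y+1)) (hLU : ∀ j, L j ≤ U j) :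
    (univ.filter fun i : Fin y => gstat L i = gstat U i).card
      = y - (cov (fun j => (L j : ℕ)) (fun j => (U j : ℕ))).card := by
  rw [Finset.filter_congr (fun i _ => by rw [gstat_eq_iff L U hLU i])]
  exact card_filter_notmem _ (cov_lt L U)

lemma ncount_top {x y : ℕ} (T P : Fin x → Fin (y+1)) (h : ∀ j, P j ≤ T j) :
    ncount T P = y - (cov (fun j => (P j : ℕ)) (fun j => (T j : ℕ))).card := by
  classical
  rw [ncount, Nat.card_eq_fintype_card, Fintype.card_subtype]
  exact ncount_aux P T h

lemma ncount_bot {x y : ℕ} (B P : Fin x → Fin (y+1)) (h : ∀ j, B j ≤ P j) :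
    ncount B P = y - (cov (fun j => (B j : ℕ)) (fun j => (P j : ℕ))).card := by
  classical
  rw [ncount, Nat.card_eq_fintype_card, Fintype.card_subtype]
  rw [Finset.filter_congr (fun i _ => by rw [eq_comm])]
  exact ncount_aux B P h

lemma ncount_le {x y : ℕ} (Q P : Fin x → Fin (y+1)) : ncount Q P ≤ y := by
  classical
  rw [ncount, Nat.card_eq_fintype_card]
  calc Fintype.card {i : Fin y // gstat P i = gstat Q i}
      ≤ Fintype.card (Fin y) := Fintype.card_subtype_le _
    _ = y := Fintype.card_fin y

lemma cov_card_le {x y : ℕ} (L U : Fin x → Fin (y+1)) :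
    (cov (fun j => (L j : ℕ)) (fun j => (U j : ℕ))).card ≤ y := by
  have hsub : cov (fun j => (L j : ℕ)) (fun j => (U j : ℕ)) ⊆ Finset.range y :=
    fun s hs => Finset.mem_range.2 (cov_lt L U s hs)
  calc (cov (fun j => (L j : ℕ)) (fun j => (U j : ℕ))).card
      ≤ (Finset.range y).card := Finset.card_le_card hsub
    _ = y := Finset.card_range y

lemma single_pair_eq (b d a e : ℕ) :
    (Finsupp.single (0 : Fin 2) b + Finsupp.single 1 d
      = Finsupp.single 0 a + Finsupp.single 1 e) ↔ (b = a ∧ d = e) := by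
  constructor
  · intro H
    have h0 := DFunLike.congr_fun H 0
    have h1 := DFunLike.congr_fun H 1
    simp [Finsupp.single_apply] at h0 h1
    exact ⟨h0, h1⟩
  · rintro ⟨rfl, rfl⟩
    rfl

lemma coeff_uv (b d a e : ℕ) :
    MvPolynomial.coeff (Finsupp.single 0 a + Finsupp.single 1 e) (u ^ b * v ^ d)
      = if b = a ∧ d = e then (1 : ℤ) else 0 := by
  unfold u v
  rw [X_pow_eq_monomial, X_pow_eq_monomial, monomial_mul, coeff_monomial]
  rw [mul_one]
  congr 1
  rw [eq_iff_iff]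
  exact single_pair_eq b d a e


lemma coeff_DD {x : ℕ} (T B : Fin x → ℕ) (a e : ℕ) :
    MvPolynomial.coeff (Finsupp.single 0 a + Finsupp.single 1 e) (DD T B)
      = (((pathsF T B).filter fun Q => bc B Q = a ∧ (cov Q T).card = e).card : ℤ) := by
  classical
  rw [DD, MvPolynomial.coeff_sum]
  rw [Finset.sum_congr rfl fun P _ => coeff_uv (bc B P) ((cov P T).card) a e]
  rw [Finset.sum_boole]

lemma coeff_GG {x : ℕ} (T B : Fin x → ℕ) (a e : ℕ) :
    MvPolynomial.coeff (Finsupp.single 0 a + Finsupp.single 1 e) (GG T B)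
      = (((pathsF T B).filter fun Q => bc T Q = a ∧ (cov B Q).card = e).card : ℤ) := by
  classical
  rw [GG, MvPolynomial.coeff_sum]
  rw [Finset.sum_congr rfl fun P _ => coeff_uv (bc T P) ((cov B P).card) a e]
  rw [Finset.sum_boole]

lemma card_count_D {x y : ℕ} (T B : Fin x → Fin (y+1)) (a c : ℕ) (hc : c ≤ y) :
    Nat.card {P : Fin x → Fin (y+1) // InP T B P ∧ ccount B P = a ∧ ncount T P = c}
      = ((pathsF (fun j => (T j : ℕ)) (fun j => (B j : ℕ))).filter
          fun Q => bc (fun j => (B j : ℕ)) Q = a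
            ∧ (cov Q (fun j => (T j : ℕ))).card = y - c).card := by
  classical
  rw [Nat.card_eq_fintype_card, Fintype.card_subtype]
  refine Finset.card_bij (fun P _ => fun j => (P j : ℕ)) ?_ ?_ ?_
  · intro P hP
    simp only [Finset.mem_filter, Finset.mem_univ, true_and] at hP
    obtain ⟨⟨hmono, hbd⟩, hcc, hnc⟩ := hP
    rw [ccount_eq] at hcc
    rw [ncount_top T P (fun j => (hbd j).2)] at hnc
    have hcard := cov_card_le P T
    simp only [Finset.mem_filter]
    exact ⟨mem_pathsF.2 ⟨fun p q hpq => hmono hpq,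
      fun j => ⟨(hbd j).1, (hbd j).2⟩⟩, hcc, by omega⟩
  · intro P hP Q hQ heq
    funext j
    exact Fin.val_injective (congrFun heq j)
  · intro Q hQ
    simp only [Finset.mem_filter] at hQ
    obtain ⟨hmem, h1, h2⟩ := hQ
    rw [mem_pathsF] at hmem
    obtain ⟨hm, hbd⟩ := hmem
    have hlt : ∀ j, Q j < y + 1 := by
      intro j
      have := (hbd j).2
      have := (T j).isLt
      omega
    refine ⟨fun j => ⟨Q j, hlt j⟩, ?_, rfl⟩
    simp only [Finset.mem_filter, Finset.mem_univ, true_and]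
    refine ⟨⟨fun p q hpq => hm hpq, fun j => ⟨(hbd j).1, (hbd j).2⟩⟩, ?_, ?_⟩
    · rw [ccount_eq]
      exact h1
    · rw [ncount_top]
      · have hcard := cov_card_le (fun j => (⟨Q j, hlt j⟩ : Fin (y+1))) T
        have : (cov (fun j => ((⟨Q j, hlt j⟩ : Fin (y+1)) : ℕ)) (fun j => (T j : ℕ))).card
            = (cov Q (fun j => (T j : ℕ))).card := rfl
        omega
      · exact fun j => (hbd j).2

lemma card_count_G {x y : ℕ} (T B : Fin x → Fin (y+1)) (a c : ℕ) (hc : c ≤ y) :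
    Nat.card {P : Fin x → Fin (y+1) // InP T B P ∧ ccount T P = a ∧ ncount B P = c}
      = ((pathsF (fun j => (T j : ℕ)) (fun j => (B j : ℕ))).filter
          fun Q => bc (fun j => (T j : ℕ)) Q = a
            ∧ (cov (fun j => (B j : ℕ)) Q).card = y - c).card := by
  classical
  rw [Nat.card_eq_fintype_card, Fintype.card_subtype]
  refine Finset.card_bij (fun P _ => fun j => (P j : ℕ)) ?_ ?_ ?_
  · intro P hP
    simp only [Finset.mem_filter, Finset.mem_univ, true_and] at hP
    obtain ⟨⟨hmono, hbd⟩, hcc, hnc⟩ := hP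
    rw [ccount_eq] at hcc
    rw [ncount_bot B P (fun j => (hbd j).1)] at hnc
    have hcard := cov_card_le B P
    simp only [Finset.mem_filter]
    exact ⟨mem_pathsF.2 ⟨fun p q hpq => hmono hpq,
      fun j => ⟨(hbd j).1, (hbd j).2⟩⟩, hcc, by omega⟩
  · intro P hP Q hQ heq
    funext j
    exact Fin.val_injective (congrFun heq j)
  · intro Q hQ
    simp only [Finset.mem_filter] at hQ
    obtain ⟨hmem, h1, h2⟩ := hQ
    rw [mem_pathsF] at hmem
    obtain ⟨hm, hbd⟩ := hmem
    have hlt : ∀ j, Q j < y + 1 := by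
      intro j
      have := (hbd j).2
      have := (T j).isLt
      omega
    refine ⟨fun j => ⟨Q j, hlt j⟩, ?_, rfl⟩
    simp only [Finset.mem_filter, Finset.mem_univ, true_and]
    refine ⟨⟨fun p q hpq => hm hpq, fun j => ⟨(hbd j).1, (hbd j).2⟩⟩, ?_, ?_⟩
    · rw [ccount_eq]
      exact h1
    · rw [ncount_bot]
      · have hcard := cov_card_le B (fun j => (⟨Q j, hlt j⟩ : Fin (y+1)))
        have : (cov (fun j => (B j : ℕ)) (fun j => ((⟨Q j, hlt j⟩ : Fin (y+1)) : ℕ))).card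
            = (cov (fun j => (B j : ℕ)) Q).card := rfl
        omega
      · exact fun j => (hbd j).1


end ER


/-- The pairs `(b, ℓ)` and `(t, r)` have the same joint distribution over `P(T,B)`. -/
theorem stmt1 {x y : ℕ} (T B : Fin x → Fin (y+1))
    (hT : Monotone T) (hB : Monotone B) (hTB : ∀ j, B j ≤ T j) (a c : ℕ) :
    Nat.card {P : Fin x → Fin (y+1) // InP T B P ∧ ccount B P = a ∧ ncount T P = c}
    = Nat.card {P : Fin x → Fin (y+1) // InP T B P ∧ ccount T P = a ∧ ncount B P = c} := by
  classical
  rcases le_or_gt c y with hc | hc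
  · rw [ER.card_count_D T B a c hc, ER.card_count_G T B a c hc]
    have hmT : Monotone (fun j => (T j : ℕ)) := fun p q hpq => hT hpq
    have hmB : Monotone (fun j => (B j : ℕ)) := fun p q hpq => hB hpq
    have hle : ∀ j, (B j : ℕ) ≤ (T j : ℕ) := fun j => hTB j
    have hDG := ER.DG x (fun j => (T j : ℕ)) (fun j => (B j : ℕ)) hmT hmB hle
    have h1 := ER.coeff_DD (fun j => (T j : ℕ)) (fun j => (B j : ℕ)) a (y - c)
    have h2 := ER.coeff_GG (fun j => (T j : ℕ)) (fun j => (B j : ℕ)) a (y - c)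
    rw [hDG, h2] at h1
    exact_mod_cast h1.symm
  · have e1 : IsEmpty {P : Fin x → Fin (y+1) // InP T B P ∧ ccount B P = a ∧ ncount T P = c} := by
      refine ⟨?_⟩
      rintro ⟨P, -, -, hn⟩
      have := ER.ncount_le T P
      omega
    have e2 : IsEmpty {P : Fin x → Fin (y+1) // InP T B P ∧ ccount T P = a ∧ ncount B P = c} := by
      refine ⟨?_⟩
      rintro ⟨P, -, -, hn⟩
      have := ER.ncount_le B P
      omega
    rw [Nat.card_of_isEmpty, Nat.card_of_isEmpty]
end

section
/- Let e, f, u be natural numbers such that (as integers) u ≥ e − f and u ≥ f − e + 2. Then the number of words over {t̄, b̄} with e letters t̄, f letters b̄, and exactly u unmatched letters equals the number of words with e−1 letters t̄, f+1 letters b̄, and exactly u unmatched letters. -/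
/-- Words over the alphabet `{t̄, b̄}` are lists of booleans, where `true`
represents `t̄` and `false` represents `b̄`.
`prefMax w` is the maximum, over all prefixes `p` of `w` (including the empty
prefix), of (number of `b̄`'s in `p`) − (number of `t̄`'s in `p`)
(truncated subtraction; since the empty prefix contributes `0`, this agrees
with the integer maximum). -/
def prefMax (w : List Bool) : ℕ :=
  ((List.range (w.length + 1)).map fun n =>
    (w.take n).count false - (w.take n).count true).foldr max 0

/-- The number of unmatched letters of a word `w` with `e` letters `t̄` and `f`
letters `b̄`, namely `(e − f) + 2 · prefMax w` (as an integer; it is always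
a nonnegative number). -/
def unmatchedCount (w : List Bool) : ℤ :=
  ((w.count true : ℤ) - (w.count false : ℤ)) + 2 * (prefMax w : ℤ)

namespace Stmt6Aux

/-- Integer "descent" count of a word: #false − #true. -/
def S (w : List Bool) (n : ℕ) : ℤ :=
  ((w.take n).count false : ℤ) - ((w.take n).count true : ℤ)

def maxS (w : List Bool) : ℤ :=
  (((List.range (w.length + 1)).map (S w)).foldr max 0)

lemma foldr_max_nonneg (l : List ℤ) : 0 ≤ l.foldr max 0 := by
  induction l with
  | nil => simp
  | cons a t ih => simp only [List.foldr]; exact le_trans ih (le_max_right _ _)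

lemma le_foldr_max {l : List ℤ} {x : ℤ} (h : x ∈ l) : x ≤ l.foldr max 0 := by
  induction l with
  | nil => simp at h
  | cons a t ih =>
    rcases List.mem_cons.1 h with rfl | h
    · exact le_max_left _ _
    · exact le_trans (ih h) (le_max_right _ _)

lemma foldr_max_le {l : List ℤ} {x : ℤ} (h0 : 0 ≤ x) (hub : ∀ y ∈ l, y ≤ x) :
    l.foldr max 0 ≤ x := by
  induction l with
  | nil => simpa
  | cons a t ih =>
    simp only [List.foldr]
    exact max_le (hub a List.mem_cons_self) (ih fun y hy => hub y (List.mem_cons_of_mem _ hy))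

lemma foldr_max_eq {l : List ℤ} {x : ℤ} (hx : x ∈ l) (h0 : 0 ≤ x)
    (hub : ∀ y ∈ l, y ≤ x) : l.foldr max 0 = x :=
  le_antisymm (foldr_max_le h0 hub) (le_foldr_max hx)

lemma cast_foldr_max (l : List ℕ) : ((l.foldr max 0 : ℕ) : ℤ) = (l.map (Nat.cast)).foldr max 0 := by
  induction l with
  | nil => simp
  | cons a t ih => simp [Nat.cast_max, ih]

lemma prefMax_cast (w : List Bool) : (prefMax w : ℤ) = maxS w := by
  unfold prefMax maxS
  rw [cast_foldr_max, List.map_map]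
  have hmem : ∀ y ∈ (List.range (w.length + 1)).map
      ((fun n : ℕ => ((n : ℤ))) ∘ fun n => (w.take n).count false - (w.take n).count true),
      ∃ n ∈ List.range (w.length + 1), y = max (S w n) 0 := by
    intro y hy
    obtain ⟨n, hn, rfl⟩ := List.mem_map.1 hy
    refine ⟨n, hn, ?_⟩
    simp only [Function.comp_apply, S]
    omega
  -- show the two folds agree
  have key : ∀ (L : List ℕ),
      ((L.map ((fun n : ℕ => ((n : ℤ))) ∘ fun n => (w.take n).count false - (w.take n).count true)).foldr max 0)
      = ((L.map (S w)).foldr max 0) := by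
    intro L
    induction L with
    | nil => simp
    | cons a t ih =>
      simp only [List.map_cons, List.foldr]
      rw [ih]
      have h1 : ((((w.take a).count false - (w.take a).count true : ℕ)) : ℤ)
          = max (S w a) 0 := by simp only [S]; omega
      have h2 : 0 ≤ ((t.map (S w)).foldr max 0) := foldr_max_nonneg _
      simp only [Function.comp_apply, h1]
      rcases le_total (S w a) 0 with h | h
      · rw [max_eq_right h, max_eq_right h2, max_eq_right (le_trans h h2)]
      · rw [max_eq_left h]
  exact key _

lemma S_zero (w : List Bool) : S w 0 = 0 := by simp [S]

lemma S_length (w : List Bool) : S w w.length = ((w.count false : ℤ) - w.count true) := by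
  simp [S]

lemma S_succ (w : List Bool) (n : ℕ) (h : n < w.length) :
    S w (n + 1) = S w n + (if w[n] = false then 1 else -1) := by
  have ht : w.take (n + 1) = w.take n ++ [w[n]] := by
    rw [List.take_succ, List.getElem?_eq_getElem h]; rfl
  simp only [S, ht, List.count_append]
  cases hb : w[n] <;> simp [List.count_singleton'] <;> ring

lemma le_maxS {w : List Bool} {n : ℕ} (h : n ≤ w.length) : S w n ≤ maxS w := by
  apply le_foldr_max
  exact List.mem_map.2 ⟨n, List.mem_range.2 (Nat.lt_succ_of_le h), rfl⟩

lemma maxS_nonneg (w : List Bool) : 0 ≤ maxS w := foldr_max_nonneg _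

lemma foldr_max_mem (l : List ℤ) : l.foldr max 0 = 0 ∨ l.foldr max 0 ∈ l := by
  induction l with
  | nil => left; rfl
  | cons a t ih =>
    simp only [List.foldr]
    rcases le_total a (t.foldr max 0) with h | h
    · rw [max_eq_right h]
      rcases ih with h0 | hm
      · left; exact h0
      · right; exact List.mem_cons_of_mem _ hm
    · rw [max_eq_left h]
      right; exact List.mem_cons_self

lemma exists_S_eq_maxS (w : List Bool) : ∃ n ≤ w.length, S w n = maxS w := by
  rcases foldr_max_mem ((List.range (w.length + 1)).map (S w)) with h | h
  · exact ⟨0, Nat.zero_le _, by rw [S_zero, maxS, h]⟩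
  · obtain ⟨n, hn, hv⟩ := List.mem_map.1 h
    exact ⟨n, Nat.lt_succ_iff.1 (List.mem_range.1 hn), hv⟩

lemma maxS_eq {w : List Bool} {x : ℤ} (h0 : 0 ≤ x)
    (hmem : ∃ n ≤ w.length, S w n = x) (hub : ∀ n ≤ w.length, S w n ≤ x) :
    maxS w = x := by
  obtain ⟨n, hn, hv⟩ := hmem
  refine foldr_max_eq ?_ h0 ?_
  · exact List.mem_map.2 ⟨n, List.mem_range.2 (Nat.lt_succ_of_le hn), hv⟩
  · intro y hy
    obtain ⟨m, hm, rfl⟩ := List.mem_map.1 hy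
    exact hub m (Nat.lt_succ_iff.1 (List.mem_range.1 hm))

/-- Flipping one letter: effect on counts. -/
lemma count_flip {l : List Bool} {i : ℕ} {a : Bool} (h : i < l.length) (ha : l[i] = a) :
    (l.set i (!a)).count (!a) = l.count (!a) + 1 ∧
    (l.set i (!a)).count a + 1 = l.count a := by
  induction l generalizing i with
  | nil => simp at h
  | cons b t ih =>
    cases i with
    | zero =>
      simp only [List.getElem_cons_zero] at ha
      subst ha
      simp [List.count_cons]
    | succ n =>
      simp only [List.length_cons, Nat.add_lt_add_iff_right] at h
      simp only [List.getElem_cons_succ] at ha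
      obtain ⟨h1, h2⟩ := ih h ha
      constructor <;> simp [List.count_cons, h1, ← h2] <;> omega

lemma S_set_of_le {w : List Bool} {i n : ℕ} {b : Bool} (h : n ≤ i) :
    S (w.set i b) n = S w n := by
  unfold S
  rw [List.take_set]
  rcases le_or_gt w.length n with hl | hl
  · rw [List.take_of_length_le hl,
      List.set_eq_of_length_le (le_trans hl h)]
  · rw [List.set_eq_of_length_le (by rw [List.length_take]; omega)]

lemma S_set_false_gt {w : List Bool} {i n : ℕ} (hi : i < w.length)
    (ha : w[i] = true) (hn : i < n) :
    S (w.set i false) n = S w n + 2 := by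
  have hlt : i < (w.take n).length := by rw [List.length_take]; omega
  have hgt : (w.take n)[i] = true := by rw [List.getElem_take]; exact ha
  have hcf := count_flip hlt hgt
  simp only [Bool.not_true] at hcf
  obtain ⟨h1, h2⟩ := hcf
  unfold S
  rw [List.take_set, h1]
  omega

lemma S_set_true_gt {w : List Bool} {i n : ℕ} (hi : i < w.length)
    (ha : w[i] = false) (hn : i < n) :
    S (w.set i true) n = S w n - 2 := by
  have hlt : i < (w.take n).length := by rw [List.length_take]; omega
  have hgt : (w.take n)[i] = false := by rw [List.getElem_take]; exact ha
  have hcf := count_flip hlt hgt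
  simp only [Bool.not_false] at hcf
  obtain ⟨h1, h2⟩ := hcf
  unfold S
  rw [List.take_set, h1]
  omega

lemma set_getElem_self {l : List Bool} {i : ℕ} {a : Bool} (h : i < l.length) (ha : l[i] = a) :
    l.set i a = l := by
  induction l generalizing i with
  | nil => simp at h
  | cons b t ih =>
    cases i with
    | zero => simp_all
    | succ n =>
      simp only [List.length_cons, Nat.add_lt_add_iff_right] at h
      simp only [List.getElem_cons_succ] at ha
      simp [List.set, ih h ha]

lemma maxS_le_count_false (w : List Bool) : maxS w ≤ (w.count false : ℤ) := by
  apply foldr_max_le (by positivity)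
  intro y hy
  obtain ⟨n, hn, rfl⟩ := List.mem_map.1 hy
  unfold S
  have := ((List.take_sublist n w).count_le false)
  omega

noncomputable def lastMaxIdx (w : List Bool) : ℕ :=
  Nat.findGreatest (fun n => S w n = maxS w) w.length

lemma exists_S_eq_maxS' (w : List Bool) : ∃ n, S w n = maxS w := by
  obtain ⟨n, _, h⟩ := exists_S_eq_maxS w; exact ⟨n, h⟩

noncomputable def firstMaxIdx (w : List Bool) : ℕ := Nat.find (exists_S_eq_maxS' w)

lemma lastMaxIdx_spec (w : List Bool) : S w (lastMaxIdx w) = maxS w := by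
  obtain ⟨n, hn, h⟩ := exists_S_eq_maxS w
  rw [lastMaxIdx]
  exact Nat.findGreatest_spec (P := fun n => S w n = maxS w) hn h

lemma lastMaxIdx_le (w : List Bool) : lastMaxIdx w ≤ w.length := Nat.findGreatest_le _

lemma lastMaxIdx_lt {w : List Bool} (hlt : S w w.length < maxS w) :
    lastMaxIdx w < w.length := by
  rcases lt_or_eq_of_le (lastMaxIdx_le w) with h | h
  · exact h
  · exfalso; have := lastMaxIdx_spec w; rw [h] at this; omega

lemma S_lt_of_gt_lastMaxIdx {w : List Bool} {n : ℕ} (h1 : lastMaxIdx w < n)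
    (h2 : n ≤ w.length) : S w n < maxS w :=
  lt_of_le_of_ne (le_maxS h2) (Nat.findGreatest_is_greatest h1 h2)

lemma getElem_lastMaxIdx {w : List Bool} (hlt : S w w.length < maxS w) :
    w[lastMaxIdx w]'(lastMaxIdx_lt hlt) = true := by
  have hiw : lastMaxIdx w < w.length := lastMaxIdx_lt hlt
  have hstep := S_succ w (lastMaxIdx w) hiw
  have hspec := lastMaxIdx_spec w
  have hub : S w (lastMaxIdx w + 1) < maxS w :=
    S_lt_of_gt_lastMaxIdx (Nat.lt_succ_self _) (by omega)
  cases hg : w[lastMaxIdx w] with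
  | false => rw [hg] at hstep; simp at hstep; omega
  | true => rfl

lemma S_succ_lastMaxIdx {w : List Bool} (hlt : S w w.length < maxS w) :
    S w (lastMaxIdx w + 1) = maxS w - 1 := by
  have hiw := lastMaxIdx_lt hlt
  have hstep := S_succ w _ hiw
  rw [getElem_lastMaxIdx hlt] at hstep
  simp at hstep
  have := lastMaxIdx_spec w
  omega

lemma maxS_flipDown {w : List Bool} (hlt : S w w.length < maxS w) :
    maxS (w.set (lastMaxIdx w) false) = maxS w + 1 := by
  have hiw := lastMaxIdx_lt hlt
  have hg := getElem_lastMaxIdx hlt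
  apply maxS_eq
  · have := maxS_nonneg w; omega
  · refine ⟨lastMaxIdx w + 1, ?_, ?_⟩
    · rw [List.length_set]; omega
    · rw [S_set_false_gt hiw hg (Nat.lt_succ_self _), S_succ_lastMaxIdx hlt]; ring
  · intro n hn
    rw [List.length_set] at hn
    rcases le_or_gt n (lastMaxIdx w) with h | h
    · rw [S_set_of_le h]
      have := le_maxS (le_trans h (le_of_lt hiw))
      omega
    · rw [S_set_false_gt hiw hg h]
      have := S_lt_of_gt_lastMaxIdx h hn
      omega

lemma firstMaxIdx_spec (w : List Bool) : S w (firstMaxIdx w) = maxS w :=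
  Nat.find_spec (exists_S_eq_maxS' w)

lemma firstMaxIdx_le (w : List Bool) : firstMaxIdx w ≤ w.length := by
  obtain ⟨n, hn, h⟩ := exists_S_eq_maxS w
  exact le_trans (Nat.find_min' _ h) hn

lemma S_lt_of_lt_firstMaxIdx {w : List Bool} {n : ℕ} (h : n < firstMaxIdx w) :
    S w n < maxS w := by
  have hle : n ≤ w.length := le_trans (le_of_lt h) (firstMaxIdx_le w)
  exact lt_of_le_of_ne (le_maxS hle) (Nat.find_min (exists_S_eq_maxS' w) h)

lemma firstMaxIdx_pos {w : List Bool} (hpos : 0 < maxS w) : 0 < firstMaxIdx w := by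
  rcases Nat.eq_zero_or_pos (firstMaxIdx w) with h | h
  · exfalso
    have := firstMaxIdx_spec w
    rw [h, S_zero] at this
    omega
  · exact h

lemma pred_firstMaxIdx_lt {w : List Bool} (hpos : 0 < maxS w) :
    firstMaxIdx w - 1 < w.length := by
  have h1 := firstMaxIdx_pos hpos
  have h2 := firstMaxIdx_le w
  omega

lemma getElem_pred_firstMaxIdx {w : List Bool} (hpos : 0 < maxS w) :
    w[firstMaxIdx w - 1]'(pred_firstMaxIdx_lt hpos) = false := by
  have h1 := firstMaxIdx_pos hpos
  have hiw := pred_firstMaxIdx_lt hpos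
  have hstep := S_succ w _ hiw
  have hsucc : firstMaxIdx w - 1 + 1 = firstMaxIdx w := by omega
  rw [hsucc] at hstep
  have hspec := firstMaxIdx_spec w
  have hlt : S w (firstMaxIdx w - 1) < maxS w :=
    S_lt_of_lt_firstMaxIdx (by omega)
  cases hg : w[firstMaxIdx w - 1] with
  | true => rw [hg] at hstep; simp at hstep; omega
  | false => rfl

lemma S_pred_firstMaxIdx {w : List Bool} (hpos : 0 < maxS w) :
    S w (firstMaxIdx w - 1) = maxS w - 1 := by
  have h1 := firstMaxIdx_pos hpos
  have hiw := pred_firstMaxIdx_lt hpos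
  have hstep := S_succ w _ hiw
  rw [getElem_pred_firstMaxIdx hpos] at hstep
  simp at hstep
  have hsucc : firstMaxIdx w - 1 + 1 = firstMaxIdx w := by omega
  rw [hsucc] at hstep
  have hspec := firstMaxIdx_spec w
  omega

lemma maxS_flipUp {w : List Bool} (hpos : 0 < maxS w) :
    maxS (w.set (firstMaxIdx w - 1) true) = maxS w - 1 := by
  have hiw := pred_firstMaxIdx_lt hpos
  have hg := getElem_pred_firstMaxIdx hpos
  have h1 := firstMaxIdx_pos hpos
  apply maxS_eq
  · omega
  · refine ⟨firstMaxIdx w - 1, ?_, ?_⟩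
    · rw [List.length_set]; omega
    · rw [S_set_of_le (le_refl _), S_pred_firstMaxIdx hpos]
  · intro n hn
    rw [List.length_set] at hn
    rcases le_or_gt n (firstMaxIdx w - 1) with h | h
    · rw [S_set_of_le h]
      have := S_lt_of_lt_firstMaxIdx (show n < firstMaxIdx w by omega)
      omega
    · rw [S_set_true_gt hiw hg h]
      have := le_maxS hn
      omega

lemma firstMaxIdx_flipDown {w : List Bool} (hlt : S w w.length < maxS w) :
    firstMaxIdx (w.set (lastMaxIdx w) false) = lastMaxIdx w + 1 := by
  have hiw := lastMaxIdx_lt hlt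
  have hg := getElem_lastMaxIdx hlt
  rw [firstMaxIdx, Nat.find_eq_iff]
  constructor
  · rw [maxS_flipDown hlt, S_set_false_gt hiw hg (Nat.lt_succ_self _),
      S_succ_lastMaxIdx hlt]
    ring
  · intro n hn
    rw [maxS_flipDown hlt, S_set_of_le (by omega)]
    have hle : S w n ≤ maxS w := le_maxS (by omega)
    omega

lemma lastMaxIdx_flipUp {w : List Bool} (hpos : 0 < maxS w) :
    lastMaxIdx (w.set (firstMaxIdx w - 1) true) = firstMaxIdx w - 1 := by
  have hiw := pred_firstMaxIdx_lt hpos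
  have hg := getElem_pred_firstMaxIdx hpos
  rw [lastMaxIdx, Nat.findGreatest_eq_iff]
  refine ⟨?_, fun _ => ?_, fun n hn hn' => ?_⟩
  · rw [List.length_set]; omega
  · rw [maxS_flipUp hpos, S_set_of_le (le_refl _), S_pred_firstMaxIdx hpos]
  · rw [maxS_flipUp hpos, S_set_true_gt hiw hg hn]
    rw [List.length_set] at hn'
    have := le_maxS hn'
    omega

lemma unmatched_eq (w : List Bool) :
    unmatchedCount w = ((w.count true : ℤ) - w.count false) + 2 * maxS w := by
  rw [unmatchedCount, prefMax_cast]


end Stmt6Aux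


open Stmt6Aux in
/-- If `u ≥ e − f` and `u ≥ f − e + 2`, then the number of words with `e` letters
`t̄`, `f` letters `b̄` and `u` unmatched letters equals the number of words with
`e−1` letters `t̄`, `f+1` letters `b̄` and `u` unmatched letters. -/
theorem stmt6 (e f u : ℕ) (h1 : (e : ℤ) - (f : ℤ) ≤ (u : ℤ))
    (h2 : (f : ℤ) - (e : ℤ) + 2 ≤ (u : ℤ)) :
    Nat.card {w : List Bool // w.count true = e ∧ w.count false = f ∧
        unmatchedCount w = (u : ℤ)}
    = Nat.card {w : List Bool // w.count true = e - 1 ∧ w.count false = f + 1 ∧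
        unmatchedCount w = (u : ℤ)} := by
  have key : ∀ w : List Bool, w.count true = e → w.count false = f →
      unmatchedCount w = (u : ℤ) → S w w.length < maxS w := by
    intro w he hf hu
    rw [unmatched_eq, he, hf] at hu
    rw [S_length, he, hf]
    omega
  have key2 : ∀ w : List Bool, w.count true = e - 1 → w.count false = f + 1 →
      unmatchedCount w = (u : ℤ) → 0 < maxS w ∧ 1 ≤ e := by
    intro w he hf hu
    rw [unmatched_eq, he, hf] at hu
    have hub := maxS_le_count_false w
    rw [hf] at hub
    have hnn := maxS_nonneg w
    constructor <;> omega
  apply Nat.card_congr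
  refine ⟨fun x => ⟨x.1.set (lastMaxIdx x.1) false, ?_⟩,
    fun y => ⟨y.1.set (firstMaxIdx y.1 - 1) true, ?_⟩, ?_, ?_⟩
  · obtain ⟨w, he, hf, hu⟩ := x
    dsimp only
    have hlt := key w he hf hu
    have hiw := lastMaxIdx_lt hlt
    have hg := getElem_lastMaxIdx hlt
    have hcf := count_flip hiw hg
    simp only [Bool.not_true] at hcf
    obtain ⟨hc1, hc2⟩ := hcf
    rw [unmatched_eq, he, hf] at hu
    refine ⟨by omega, by omega, ?_⟩
    rw [unmatched_eq, maxS_flipDown hlt]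
    omega
  · obtain ⟨w, he, hf, hu⟩ := y
    dsimp only
    obtain ⟨hpos, hepos⟩ := key2 w he hf hu
    have hiw := pred_firstMaxIdx_lt hpos
    have hg := getElem_pred_firstMaxIdx hpos
    have hcf := count_flip hiw hg
    simp only [Bool.not_false] at hcf
    obtain ⟨hc1, hc2⟩ := hcf
    rw [unmatched_eq, he, hf] at hu
    refine ⟨by omega, by omega, ?_⟩
    rw [unmatched_eq, maxS_flipUp hpos]
    omega
  · rintro ⟨w, he, hf, hu⟩
    have hlt := key w he hf hu
    apply Subtype.ext
    show (w.set (lastMaxIdx w) false).set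
      (firstMaxIdx (w.set (lastMaxIdx w) false) - 1) true = w
    rw [firstMaxIdx_flipDown hlt]
    simp only [Nat.add_sub_cancel]
    rw [List.set_set]
    exact set_getElem_self (lastMaxIdx_lt hlt) (getElem_lastMaxIdx hlt)
  · rintro ⟨w, he, hf, hu⟩
    obtain ⟨hpos, hepos⟩ := key2 w he hf hu
    apply Subtype.ext
    show (w.set (firstMaxIdx w - 1) true).set
      (lastMaxIdx (w.set (firstMaxIdx w - 1) true)) false = w
    rw [lastMaxIdx_flipUp hpos]
    rw [List.set_set]
    exact set_getElem_self (pred_firstMaxIdx_lt hpos) (getElem_pred_firstMaxIdx hpos)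
end

section
/- Assume x ≥ 1. The following are equivalent: (i) for all natural numbers i, j, i', j' with i + j = i' + j', the number of P ∈ P(T,B) with t(P) = i and b(P) = j equals the number of P ∈ P(T,B) with t(P) = i' and b(P) = j'; (ii) for every P ∈ P(T,B) and all indices j₁, j₂ ∈ Fin x, if P j₁ = B j₁ and P j₂ = T j₂ then j₁ < j₂ (every bottom contact of every path occurs strictly before every top contact); (iii) B (x−1) < T 0 (the last east step of B is strictly lower than the first east step of T). -/
namespace Stmt9

variable {x y : ℕ}

/-- previous index (0 ↦ 0) -/
def prv (m : Fin x) : Fin x := ⟨m.val - 1, Nat.lt_of_le_of_lt (Nat.sub_le _ _) m.isLt⟩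

/-- next index (last ↦ last) -/
def nxt (m : Fin x) : Fin x := if h : m.val + 1 < x then ⟨m.val + 1, h⟩ else m

/-- every bottom contact strictly precedes every top contact -/
def Sorted (T B P : Fin x → Fin (y+1)) : Prop :=
  ∀ j1 j2 : Fin x, P j1 = B j1 → P j2 = T j2 → j1 < j2

open Finset

noncomputable local instance (p : (Fin x → Fin (y+1)) → Prop) : DecidablePred p :=
  Classical.decPred p

def topF (T : Fin x → Fin (y+1)) (P : Fin x → Fin (y+1)) : Finset (Fin x) :=
  univ.filter (fun m => P m = T m)

def botF (B : Fin x → Fin (y+1)) (P : Fin x → Fin (y+1)) : Finset (Fin x) :=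
  univ.filter (fun m => P m = B m)

lemma ccount_eq (Q P : Fin x → Fin (y+1)) :
    ccount Q P = (univ.filter (fun m => P m = Q m)).card := by
  rw [ccount, Nat.card_eq_fintype_card, Fintype.card_subtype]

lemma mem_topF {T P : Fin x → Fin (y+1)} {m : Fin x} :
    m ∈ topF T P ↔ P m = T m := by simp [topF]

lemma mem_botF {B P : Fin x → Fin (y+1)} {m : Fin x} :
    m ∈ botF B P ↔ P m = B m := by simp [botF]

/-- the forward surgery: drop top contact at `c`, shift `(w,c]` right, insert `B w` at `w`. -/
def fwd (B P : Fin x → Fin (y+1)) (c w : Fin x) : Fin x → Fin (y+1) :=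
  fun m => if m < w then P m else if m = w then B w else if m ≤ c then P (prv m) else P m

/-- the backward surgery: drop bottom contact at `e`, shift `[e,C)` left, insert `T C` at `C`. -/
def bwd (T Q : Fin x → Fin (y+1)) (e C : Fin x) : Fin x → Fin (y+1) :=
  fun m => if m < e then Q m else if m < C then Q (nxt m) else if m = C then T m else Q m

section maps

variable {T B : Fin x → Fin (y+1)}

lemma fwd_lt {P : Fin x → Fin (y+1)} {c w m : Fin x} (h : m < w) : fwd B P c w m = P m := by
  simp [fwd, h]

lemma fwd_at {P : Fin x → Fin (y+1)} {c w : Fin x} : fwd B P c w w = B w := by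
  simp [fwd]

lemma fwd_mid {P : Fin x → Fin (y+1)} {c w m : Fin x} (h1 : w < m) (h2 : m ≤ c) :
    fwd B P c w m = P (prv m) := by
  have : ¬ m < w := not_lt.mpr h1.le
  have : m ≠ w := h1.ne'
  simp [fwd, ‹¬ m < w›, ‹m ≠ w›, h2]

lemma fwd_gt {P : Fin x → Fin (y+1)} {c w m : Fin x} (hwc : w ≤ c) (h : c < m) :
    fwd B P c w m = P m := by
  have h1 : ¬ m < w := not_lt.mpr (hwc.trans h.le)
  have h2 : m ≠ w := by
    intro e; exact absurd (e ▸ h) (not_lt.mpr hwc)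
  have h3 : ¬ m ≤ c := not_le.mpr h
  simp [fwd, h1, h2, h3]

lemma bwd_lt {Q : Fin x → Fin (y+1)} {e C m : Fin x} (h : m < e) : bwd T Q e C m = Q m := by
  simp [bwd, h]

lemma bwd_mid {Q : Fin x → Fin (y+1)} {e C m : Fin x} (h1 : e ≤ m) (h2 : m < C) :
    bwd T Q e C m = Q (nxt m) := by
  have : ¬ m < e := not_lt.mpr h1
  simp [bwd, this, h2]

lemma bwd_at {Q : Fin x → Fin (y+1)} {e C : Fin x} (h1 : e ≤ C) : bwd T Q e C C = T C := by
  have h2 : ¬ C < e := not_lt.mpr h1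
  simp [bwd, h2]

lemma bwd_gt {Q : Fin x → Fin (y+1)} {e C m : Fin x} (h1 : e ≤ C) (h : C < m) :
    bwd T Q e C m = Q m := by
  have h2 : ¬ m < e := not_lt.mpr (h1.trans h.le)
  have h3 : ¬ m < C := not_lt.mpr h.le
  have h4 : m ≠ C := h.ne'
  simp [bwd, h2, h3, h4]

end maps

/-- monotone from adjacent steps -/
lemma monotone_of_adj (f : Fin x → Fin (y+1))
    (h : ∀ m : Fin x, ∀ hm : m.val + 1 < x, f m ≤ f ⟨m.val + 1, hm⟩) : Monotone f := by
  have key : ∀ k (a : Fin x) (hk : a.val + k < x), f a ≤ f ⟨a.val + k, hk⟩ := by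
    intro k
    induction k with
    | zero => intro a hk; exact le_of_eq (congrArg f (Fin.ext rfl))
    | succ n ih =>
      intro a hk
      have hn : a.val + n < x := by omega
      have h1 : f a ≤ f ⟨a.val + n, hn⟩ := ih a hn
      have hm : (⟨a.val + n, hn⟩ : Fin x).val + 1 < x := by simp only [Fin.val_mk]; omega
      have h2 := h ⟨a.val + n, hn⟩ hm
      have he : (⟨(⟨a.val + n, hn⟩ : Fin x).val + 1, hm⟩ : Fin x) = ⟨a.val + (n+1), hk⟩ :=
        Fin.ext (by simp only [Fin.val_mk]; omega)
      rw [he] at h2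
      exact h1.trans h2
  intro a b hab
  have hab' : a.val ≤ b.val := hab
  have hb : b = ⟨a.val + (b.val - a.val), by omega⟩ := Fin.ext (by simp; omega)
  rw [hb]; exact key _ a _


set_option linter.unusedSectionVars false

section core
variable {T B : Fin x → Fin (y+1)}

@[simp] lemma prv_val (m : Fin x) : (prv m).val = m.val - 1 := rfl

lemma prv_le (m : Fin x) : prv m ≤ m := by rw [Fin.le_def]; simp

lemma fin_succ_lt {m c : Fin x} (h : m < c) : m.val + 1 < x := by
  have := c.isLt; have := (Fin.lt_def.mp h); omega

/-- context for the forward surgery -/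
structure FwdCtx (T B P : Fin x → Fin (y+1)) (c w : Fin x) : Prop where
  hT : Monotone T
  hB : Monotone B
  hs : ∀ m, B m < T m
  hPm : Monotone P
  hPb : ∀ j, B j ≤ P j ∧ P j ≤ T j
  hPs : Sorted T B P
  hctop : P c = T c
  hcmin : ∀ m, P m = T m → c ≤ m
  hwc : w ≤ c
  hwcand : w.val = 0 ∨ P (prv w) ≤ B w
  hwmax : ∀ m, m ≤ c → (m.val = 0 ∨ P (prv m) ≤ B m) → m ≤ w

namespace FwdCtx

variable {P : Fin x → Fin (y+1)} {c w : Fin x} (h : FwdCtx T B P c w)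

include h

lemma factA {m : Fin x} (hm : m < c) : P m < T m :=
  lt_of_le_of_ne (h.hPb m).2 (fun e => absurd (h.hcmin m e) (not_le.mpr hm))

lemma factB {m : Fin x} (h1 : w < m) (h2 : m ≤ c) : B m < P (prv m) := by
  by_contra hcon
  exact absurd (h.hwmax m h2 (Or.inr (not_lt.mp hcon))) (not_le.mpr h1)

lemma factC {d : Fin x} (hd : P d = B d) : d < w := by
  have hdc : d < c := h.hPs d c hd h.hctop
  have hlt : d.val + 1 < x := fin_succ_lt hdc
  set d' : Fin x := ⟨d.val + 1, hlt⟩ with hd'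
  have hprv : prv d' = d := Fin.ext (by simp [hd'])
  have hcand : P (prv d') ≤ B d' := by
    rw [hprv, hd]; exact h.hB (by rw [Fin.le_def]; simp [hd'])
  have hd'c : d' ≤ c := by
    rw [Fin.le_def]; simp only [hd', Fin.val_mk]; exact Fin.lt_def.mp hdc
  have hfin := h.hwmax d' hd'c (Or.inr hcand)
  rw [Fin.lt_def]; have := Fin.le_def.mp hfin; simp [hd'] at this; omega

lemma mono : Monotone (fwd B P c w) := by
  apply monotone_of_adj
  intro m hm
  set m' : Fin x := ⟨m.val + 1, hm⟩ with hm'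
  have hmm' : m < m' := by rw [Fin.lt_def]; simp [hm']
  have hprvm' : prv m' = m := Fin.ext (by simp [hm'])
  by_cases h1 : m' < w
  · rw [fwd_lt (lt_trans hmm' h1), fwd_lt h1]; exact h.hPm hmm'.le
  · by_cases h2 : m' = w
    · have e1 : fwd B P c w m = P m := fwd_lt (h2 ▸ hmm')
      have e2 : fwd B P c w m' = B w := by rw [h2]; exact fwd_at
      rw [e1, e2]
      rcases h.hwcand with h0 | hle
      · exfalso; rw [← h2] at h0; simp [hm'] at h0
      · have hpw : prv w = m := by rw [← h2, hprvm']
        rw [← hpw]; exact hle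
    · have hwm : w ≤ m := by
        rw [Fin.le_def]
        have := Fin.lt_def.mp (lt_of_le_of_ne (not_lt.mp h1) (Ne.symm h2))
        simp [hm'] at this; omega
      by_cases h3 : m = w
      · have e1 : fwd B P c w m = B w := by rw [h3]; exact fwd_at
        by_cases h4 : m' ≤ c
        · have e2 : fwd B P c w m' = P m := by
            rw [fwd_mid (h3 ▸ hmm') h4, hprvm']
          rw [e1, e2, ← h3]; exact (h.hPb m).1
        · have e2 : fwd B P c w m' = P m' := fwd_gt h.hwc (not_le.mp h4)
          rw [e1, e2, ← h3]; exact le_trans (h.hPb m).1 (h.hPm hmm'.le)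
      · have hwm2 : w < m := lt_of_le_of_ne hwm (Ne.symm h3)
        by_cases h4 : m' ≤ c
        · rw [fwd_mid hwm2 (le_trans hmm'.le h4), fwd_mid (lt_trans hwm2 hmm') h4, hprvm']
          exact h.hPm (prv_le m)
        · by_cases h5 : m ≤ c
          · rw [fwd_mid hwm2 h5, fwd_gt h.hwc (not_le.mp h4)]
            exact le_trans (h.hPm (prv_le m)) (h.hPm hmm'.le)
          · rw [fwd_gt h.hwc (not_le.mp h5), fwd_gt h.hwc (lt_trans (not_le.mp h5) hmm')]
            exact h.hPm hmm'.le

lemma bounds : ∀ m, B m ≤ fwd B P c w m ∧ fwd B P c w m ≤ T m := by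
  intro m
  rcases lt_trichotomy m w with hc | hc | hc
  · rw [fwd_lt hc]; exact h.hPb m
  · rw [hc, fwd_at]; exact ⟨le_refl _, (h.hs w).le⟩
  · by_cases h2 : m ≤ c
    · rw [fwd_mid hc h2]
      constructor
      · exact (h.factB hc h2).le
      · exact le_trans (h.hPb (prv m)).2 (h.hT (prv_le m))
    · rw [fwd_gt h.hwc (not_le.mp h2)]; exact h.hPb m

lemma top_iff (m : Fin x) : fwd B P c w m = T m ↔ (P m = T m ∧ m ≠ c) := by
  rcases lt_trichotomy m w with hc | hc | hc
  · rw [fwd_lt hc]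
    have hmc : m < c := lt_of_lt_of_le hc h.hwc
    exact iff_of_false (ne_of_lt (h.factA hmc))
      (fun hx => absurd hx.1 (ne_of_lt (h.factA hmc)))
  · rw [hc, fwd_at]
    refine iff_of_false (ne_of_lt (h.hs w)) ?_
    rintro ⟨hPw, hwne⟩
    rcases lt_or_eq_of_le h.hwc with hlt | heq
    · exact absurd hPw (ne_of_lt (h.factA hlt))
    · exact hwne (hc ▸ heq)
  · by_cases h2 : m ≤ c
    · rw [fwd_mid hc h2]
      have hm1 : (prv m) < c := by
        rw [Fin.lt_def]; have hcv := Fin.le_def.mp h2; have hwv := Fin.lt_def.mp hc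
        simp only [prv_val]; omega
      have hne : P (prv m) ≠ T m := by
        intro hx
        have h5 : P (prv m) < T (prv m) := h.factA hm1
        have h6 : P (prv m) < T m := lt_of_lt_of_le h5 (h.hT (prv_le m))
        exact absurd hx (ne_of_lt h6)
      refine iff_of_false hne ?_
      rintro ⟨hPm', hmne⟩
      rcases lt_or_eq_of_le h2 with hlt | heq
      · exact absurd hPm' (ne_of_lt (h.factA hlt))
      · exact hmne heq
    · have h3 := not_le.mp h2
      rw [fwd_gt h.hwc h3]
      simp only [iff_self_and]
      intro _; exact (ne_of_lt h3).symm

lemma bot_iff (m : Fin x) : fwd B P c w m = B m ↔ (P m = B m ∨ m = w) := by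
  rcases lt_trichotomy m w with hc | hc | hc
  · rw [fwd_lt hc]
    constructor
    · exact fun hx => Or.inl hx
    · rintro (hx | hx); exact hx; exact absurd hx (ne_of_lt hc)
  · rw [hc, fwd_at]
    exact iff_of_true rfl (Or.inr rfl)
  · by_cases h2 : m ≤ c
    · rw [fwd_mid hc h2]
      refine iff_of_false (ne_of_gt (h.factB hc h2)) ?_
      rintro (hx | hx)
      · exact absurd (h.factC hx) (not_lt.mpr hc.le)
      · exact absurd hx (ne_of_gt hc)
    · rw [fwd_gt h.hwc (not_le.mp h2)]
      refine iff_of_false ?_ ?_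
      · intro hx; exact absurd (h.factC hx) (not_lt.mpr hc.le)
      · rintro (hx | hx)
        · exact absurd (h.factC hx) (not_lt.mpr hc.le)
        · exact absurd hx (ne_of_gt hc)

lemma sorted : Sorted T B (fwd B P c w) := by
  intro m1 m2 hb ht
  replace hb := (h.bot_iff m1).mp hb
  replace ht := (h.top_iff m2).mp ht
  have h1 : m1 ≤ w := by
    rcases hb with hx | hx
    · exact (h.factC hx).le
    · exact hx.le
  have h2 : c < m2 := lt_of_le_of_ne (h.hcmin m2 ht.1) (Ne.symm ht.2)
  exact lt_of_le_of_lt (h1.trans h.hwc) h2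

end FwdCtx
end core


section core2
variable {T B : Fin x → Fin (y+1)}

lemma nxt_pos {m : Fin x} (h : m.val + 1 < x) : nxt m = ⟨m.val + 1, h⟩ := dif_pos h

lemma le_nxt (m : Fin x) : m ≤ nxt m := by
  unfold nxt
  split
  · rw [Fin.le_def]; simp only [Fin.val_mk]; omega
  · exact le_refl _

/-- context for the backward surgery -/
structure BwdCtx (T B Q : Fin x → Fin (y+1)) (e C : Fin x) : Prop where
  hT : Monotone T
  hB : Monotone B
  hs : ∀ m, B m < T m
  hQm : Monotone Q
  hQb : ∀ j, B j ≤ Q j ∧ Q j ≤ T j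
  hQs : Sorted T B Q
  hebot : Q e = B e
  hemax : ∀ m, Q m = B m → m ≤ e
  heC : e ≤ C
  hCcand : C.val + 1 = x ∨ T C ≤ Q (nxt C)
  hCmin : ∀ m, e ≤ m → (m.val + 1 = x ∨ T m ≤ Q (nxt m)) → C ≤ m

namespace BwdCtx

variable {Q : Fin x → Fin (y+1)} {e C : Fin x} (h : BwdCtx T B Q e C)

include h

lemma factD {m : Fin x} (hm : Q m = T m) : C < m := by
  have hem : e < m := h.hQs e m h.hebot hm
  have hemv := Fin.lt_def.mp hem
  have hlt : (prv m).val + 1 < x := by simp only [prv_val]; have := m.isLt; omega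
  have hnp : nxt (prv m) = m := by
    rw [nxt_pos hlt]; exact Fin.ext (by simp only [Fin.val_mk, prv_val]; omega)
  have hcond : (prv m).val + 1 = x ∨ T (prv m) ≤ Q (nxt (prv m)) := by
    right; rw [hnp, hm]; exact h.hT (prv_le m)
  have hepm : e ≤ prv m := by rw [Fin.le_def]; simp only [prv_val]; omega
  have hc := h.hCmin (prv m) hepm hcond
  have := Fin.le_def.mp hc
  rw [Fin.lt_def]; simp only [prv_val] at this; omega

lemma factF {m : Fin x} (h1 : e ≤ m) (h2 : m < C) : Q (nxt m) < T m := by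
  by_contra hcon
  exact absurd (h.hCmin m h1 (Or.inr (not_lt.mp hcon))) (not_le.mpr h2)

lemma mono : Monotone (bwd T Q e C) := by
  apply monotone_of_adj
  intro m hm
  set m' : Fin x := ⟨m.val + 1, hm⟩ with hm'
  have hmm' : m < m' := by rw [Fin.lt_def]; simp [hm']
  have hnm : nxt m = m' := by rw [nxt_pos hm]
  by_cases h1 : m' < e
  · rw [bwd_lt (lt_trans hmm' h1), bwd_lt h1]; exact h.hQm hmm'.le
  · by_cases h2 : m' = e
    · have e1 : bwd T Q e C m = Q m := bwd_lt (h2 ▸ hmm')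
      rcases lt_or_eq_of_le h.heC with hlt | heq
      · have e2 : bwd T Q e C m' = Q (nxt m') := by
          rw [h2]; exact bwd_mid (le_refl e) hlt
        rw [e1, e2]
        exact le_trans (h.hQm hmm'.le) (h.hQm (le_nxt m'))
      · have e2 : bwd T Q e C m' = T C := by rw [h2, heq]; exact bwd_at (le_refl C)
        rw [e1, e2, ← heq, ← h2]
        exact le_trans (h.hQb m).2 (h.hT hmm'.le)
    · have hem : e ≤ m := by
        rw [Fin.le_def]
        have := Fin.lt_def.mp (lt_of_le_of_ne (not_lt.mp h1) (Ne.symm h2))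
        simp [hm'] at this; omega
      by_cases h3 : m' ≤ C
      · have hmC : m < C := lt_of_lt_of_le hmm' h3
        have e1 : bwd T Q e C m = Q m' := by rw [bwd_mid hem hmC, hnm]
        rcases lt_or_eq_of_le h3 with hlt | heq
        · rw [e1, bwd_mid (hem.trans hmm'.le) hlt]
          exact h.hQm (le_nxt m')
        · have e2 : bwd T Q e C m' = T C := by rw [heq]; exact bwd_at h.heC
          rw [e1, e2, ← heq]
          exact (h.hQb m').2
      · have hCm' : C < m' := not_le.mp h3
        by_cases h4 : m = C
        · have e1 : bwd T Q e C m = T C := by rw [h4]; exact bwd_at h.heC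
          have e2 : bwd T Q e C m' = Q m' := bwd_gt h.heC hCm'
          rw [e1, e2]
          rcases h.hCcand with h0 | hle
          · exfalso; rw [← h4] at h0; omega
          · have : nxt C = m' := by rw [← h4, hnm]
            rw [← this]; exact hle
        · have hCm : C < m := by
            rcases lt_trichotomy m C with hx | hx | hx
            · exfalso
              have := Fin.lt_def.mp hx; have := Fin.lt_def.mp hCm'
              simp [hm'] at *; omega
            · exact absurd hx h4
            · exact hx
          rw [bwd_gt h.heC hCm, bwd_gt h.heC hCm']
          exact h.hQm hmm'.le

lemma bounds : ∀ m, B m ≤ bwd T Q e C m ∧ bwd T Q e C m ≤ T m := by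
  intro m
  by_cases h1 : m < e
  · rw [bwd_lt h1]; exact h.hQb m
  · have h1' : e ≤ m := not_lt.mp h1
    by_cases h2 : m < C
    · rw [bwd_mid h1' h2]
      constructor
      · exact le_trans (h.hB (le_nxt m)) (h.hQb (nxt m)).1
      · exact (h.factF h1' h2).le
    · by_cases h3 : m = C
      · rw [h3, bwd_at h.heC]; exact ⟨(h.hs C).le, le_refl _⟩
      · have hc : C < m := lt_of_le_of_ne (not_lt.mp h2) (Ne.symm h3)
        rw [bwd_gt h.heC hc]; exact h.hQb m

lemma top_iff (m : Fin x) : bwd T Q e C m = T m ↔ (Q m = T m ∨ m = C) := by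
  by_cases h1 : m < e
  · rw [bwd_lt h1]
    constructor
    · exact fun hx => Or.inl hx
    · rintro (hx | hx); exact hx
      exact absurd hx (ne_of_lt (lt_of_lt_of_le h1 h.heC))
  · have h1' : e ≤ m := not_lt.mp h1
    by_cases h2 : m < C
    · rw [bwd_mid h1' h2]
      refine iff_of_false (ne_of_lt (h.factF h1' h2)) ?_
      rintro (hx | hx)
      · exact absurd (h.factD hx) (not_lt.mpr h2.le)
      · exact absurd hx (ne_of_lt h2)
    · by_cases h3 : m = C
      · rw [h3, bwd_at h.heC]
        exact iff_of_true rfl (Or.inr rfl)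
      · have hc : C < m := lt_of_le_of_ne (not_lt.mp h2) (Ne.symm h3)
        rw [bwd_gt h.heC hc]
        constructor
        · exact fun hx => Or.inl hx
        · rintro (hx | hx); exact hx; exact absurd hx h3

lemma bot_iff (m : Fin x) : bwd T Q e C m = B m ↔ (Q m = B m ∧ m ≠ e) := by
  by_cases h1 : m < e
  · rw [bwd_lt h1]
    constructor
    · exact fun hx => ⟨hx, ne_of_lt h1⟩
    · exact fun hx => hx.1
  · have h1' : e ≤ m := not_lt.mp h1
    by_cases h2 : m < C
    · rw [bwd_mid h1' h2]
      refine iff_of_false ?_ ?_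
      · intro hx
        have ha : B (nxt m) ≤ Q (nxt m) := (h.hQb (nxt m)).1
        have hb' : B m ≤ B (nxt m) := h.hB (le_nxt m)
        have h4 : Q (nxt m) ≤ B (nxt m) := hx.le.trans hb'
        have hc' : Q (nxt m) = B (nxt m) := le_antisymm h4 ha
        have := h.hemax (nxt m) hc'
        have hv : m.val + 1 < x := fin_succ_lt h2
        rw [nxt_pos hv] at this
        have := Fin.le_def.mp this; have := Fin.le_def.mp h1'
        simp at *; omega
      · rintro ⟨hx, hne⟩
        exact hne (le_antisymm (h.hemax m hx) h1')
    · by_cases h3 : m = C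
      · rw [h3, bwd_at h.heC]
        refine iff_of_false (ne_of_gt (h.hs C)) ?_
        rintro ⟨hx, hne⟩
        exact hne (le_antisymm (h.hemax C hx) h.heC)
      · have hc : C < m := lt_of_le_of_ne (not_lt.mp h2) (Ne.symm h3)
        rw [bwd_gt h.heC hc]
        refine iff_of_false ?_ ?_
        · intro hx
          exact absurd (h.hemax m hx) (not_le.mpr (lt_of_le_of_lt h.heC hc))
        · rintro ⟨hx, _⟩
          exact absurd (h.hemax m hx) (not_le.mpr (lt_of_le_of_lt h.heC hc))

lemma sorted : Sorted T B (bwd T Q e C) := by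
  intro m1 m2 hb ht
  replace hb := (h.bot_iff m1).mp hb
  replace ht := (h.top_iff m2).mp ht
  have h1 : m1 < e := lt_of_le_of_ne (h.hemax m1 hb.1) hb.2
  have h2 : C ≤ m2 := by
    rcases ht with hx | hx
    · exact (h.factD hx).le
    · exact hx.symm.le
  exact lt_of_lt_of_le h1 (h.heC.trans h2)

end BwdCtx
end core2


section glue
variable {T B : Fin x → Fin (y+1)}

/-- candidates for the insertion position of the new bottom contact -/
def candW (B P : Fin x → Fin (y+1)) (c : Fin x) : Finset (Fin x) :=
  univ.filter (fun m => m ≤ c ∧ (m.val = 0 ∨ P (prv m) ≤ B m))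

/-- candidates for the insertion position of the new top contact -/
def candC (T Q : Fin x → Fin (y+1)) (e : Fin x) : Finset (Fin x) :=
  univ.filter (fun m => e ≤ m ∧ (m.val + 1 = x ∨ T m ≤ Q (nxt m)))

lemma candW_nonempty (P : Fin x → Fin (y+1)) (c : Fin x) : (candW B P c).Nonempty := by
  refine ⟨⟨0, by have := c.isLt; omega⟩, ?_⟩
  simp only [candW, mem_filter, mem_univ, true_and]
  constructor
  · rw [Fin.le_def]; simp
  · left; trivial

lemma candC_nonempty (Q : Fin x → Fin (y+1)) (e : Fin x) : (candC T Q e).Nonempty := by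
  have hx : 0 < x := by have := e.isLt; omega
  refine ⟨⟨x - 1, by omega⟩, ?_⟩
  simp only [candC, mem_filter, mem_univ, true_and]
  constructor
  · rw [Fin.le_def]; show e.val ≤ x - 1; have := e.isLt; omega
  · left; show (x - 1) + 1 = x; omega

lemma mk_fwd_ctx (hT : Monotone T) (hB : Monotone B) (hs : ∀ m, B m < T m)
    {P : Fin x → Fin (y+1)} (hInP : InP T B P) (hsor : Sorted T B P)
    (hne : (topF T P).Nonempty) :
    FwdCtx T B P ((topF T P).min' hne)
      ((candW B P ((topF T P).min' hne)).max' (candW_nonempty P _)) := by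
  set c := (topF T P).min' hne with hc
  set w := (candW B P c).max' (candW_nonempty P c) with hw
  have hcmem : P c = T c := mem_topF.mp ((topF T P).min'_mem hne)
  have hwmem := (candW B P c).max'_mem (candW_nonempty P c)
  simp only [candW, mem_filter, mem_univ, true_and] at hwmem
  exact {
    hT := hT, hB := hB, hs := hs, hPm := hInP.1, hPb := hInP.2, hPs := hsor
    hctop := hcmem
    hcmin := fun m hm => Finset.min'_le _ _ (mem_topF.mpr hm)
    hwc := hwmem.1
    hwcand := hwmem.2
    hwmax := fun m h1 h2 => Finset.le_max' _ _ (by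
      simp only [candW, mem_filter, mem_univ, true_and]; exact ⟨h1, h2⟩) }

lemma mk_bwd_ctx (hT : Monotone T) (hB : Monotone B) (hs : ∀ m, B m < T m)
    {Q : Fin x → Fin (y+1)} (hInP : InP T B Q) (hsor : Sorted T B Q)
    (hne : (botF B Q).Nonempty) :
    BwdCtx T B Q ((botF B Q).max' hne)
      ((candC T Q ((botF B Q).max' hne)).min' (candC_nonempty Q _)) := by
  set e := (botF B Q).max' hne with he
  set C := (candC T Q e).min' (candC_nonempty Q e) with hC
  have hemem : Q e = B e := mem_botF.mp ((botF B Q).max'_mem hne)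
  have hCmem := (candC T Q e).min'_mem (candC_nonempty Q e)
  simp only [candC, mem_filter, mem_univ, true_and] at hCmem
  exact {
    hT := hT, hB := hB, hs := hs, hQm := hInP.1, hQb := hInP.2, hQs := hsor
    hebot := hemem
    hemax := fun m hm => Finset.le_max' _ _ (mem_botF.mpr hm)
    heC := hCmem.1
    hCcand := hCmem.2
    hCmin := fun m h1 h2 => Finset.min'_le _ _ (by
      simp only [candC, mem_filter, mem_univ, true_and]; exact ⟨h1, h2⟩) }

variable {P Q : Fin x → Fin (y+1)} {c w e C : Fin x}

/-- after the forward surgery, the last bottom contact is `w` -/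
lemma fwd_e_eq (h : FwdCtx T B P c w) (hne : (botF B (fwd B P c w)).Nonempty) :
    (botF B (fwd B P c w)).max' hne = w := by
  apply le_antisymm
  · apply Finset.max'_le
    intro m hm
    rcases (h.bot_iff m).mp (mem_botF.mp hm) with hx | hx
    · exact (h.factC hx).le
    · exact hx.le
  · exact Finset.le_max' _ _ (mem_botF.mpr ((h.bot_iff w).mpr (Or.inr rfl)))

/-- after the forward surgery, the chosen new-top candidate is `c` -/
lemma fwd_C_eq (h : FwdCtx T B P c w) (hne : (candC T (fwd B P c w) w).Nonempty) :
    (candC T (fwd B P c w) w).min' hne = c := by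
  apply le_antisymm
  · apply Finset.min'_le
    simp only [candC, mem_filter, mem_univ, true_and]
    refine ⟨h.hwc, ?_⟩
    by_cases hcx : c.val + 1 < x
    · right
      have hnc : nxt c = ⟨c.val + 1, hcx⟩ := nxt_pos hcx
      have hgt : c < nxt c := by rw [hnc, Fin.lt_def]; simp
      rw [fwd_gt h.hwc hgt, ← h.hctop]
      exact h.hPm hgt.le
    · left; have := c.isLt; omega
  · apply Finset.le_min'
    intro m hm
    simp only [candC, mem_filter, mem_univ, true_and] at hm
    obtain ⟨hwm, hcond⟩ := hm
    rcases hcond with h0 | hle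
    · rw [Fin.le_def]; have := c.isLt; omega
    · by_contra hmc
      have hmc' : m < c := not_le.mp hmc
      have hv : m.val + 1 < x := fin_succ_lt hmc'
      have hnm : nxt m = ⟨m.val + 1, hv⟩ := nxt_pos hv
      have h1 : w < nxt m := by
        rw [hnm, Fin.lt_def]; have := Fin.le_def.mp hwm; simp; omega
      have h2 : nxt m ≤ c := by
        rw [hnm, Fin.le_def]; have := Fin.lt_def.mp hmc'; simp; omega
      have hpn : prv (nxt m) = m := by
        rw [hnm]; exact Fin.ext (by simp)
      rw [fwd_mid h1 h2, hpn] at hle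
      have : P m = T m := le_antisymm (h.hPb m).2 hle
      exact absurd (h.hcmin m this) hmc

/-- after the backward surgery, the first top contact is `C` -/
lemma bwd_c_eq (h : BwdCtx T B Q e C) (hne : (topF T (bwd T Q e C)).Nonempty) :
    (topF T (bwd T Q e C)).min' hne = C := by
  apply le_antisymm
  · exact Finset.min'_le _ _ (mem_topF.mpr ((h.top_iff C).mpr (Or.inr rfl)))
  · apply Finset.le_min'
    intro m hm
    rcases (h.top_iff m).mp (mem_topF.mp hm) with hx | hx
    · exact (h.factD hx).le
    · exact hx.symm.le

/-- after the backward surgery, the chosen new-bottom candidate is `e` -/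
lemma bwd_w_eq (h : BwdCtx T B Q e C) (hne : (candW B (bwd T Q e C) C).Nonempty) :
    (candW B (bwd T Q e C) C).max' hne = e := by
  apply le_antisymm
  · apply Finset.max'_le
    intro m hm
    simp only [candW, mem_filter, mem_univ, true_and] at hm
    obtain ⟨hmC, hcond⟩ := hm
    by_contra hme
    have hem : e < m := not_le.mp hme
    rcases hcond with h0 | hle
    · have := Fin.lt_def.mp hem; omega
    · have hv1 : e ≤ prv m := by
        rw [Fin.le_def]; have := Fin.lt_def.mp hem; simp only [prv_val]; omega
      have hv2 : prv m < C := by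
        rw [Fin.lt_def]; have := Fin.le_def.mp hmC; have := Fin.lt_def.mp hem
        simp only [prv_val]; omega
      have hpn : nxt (prv m) = m := by
        have hlt : (prv m).val + 1 < x := by
          simp only [prv_val]; have := m.isLt; have := Fin.lt_def.mp hem; omega
        rw [nxt_pos hlt]; exact Fin.ext (by
          simp only [Fin.val_mk, prv_val]; have := Fin.lt_def.mp hem; omega)
      rw [bwd_mid hv1 hv2, hpn] at hle
      have : Q m = B m := le_antisymm hle (h.hQb m).1
      exact absurd (h.hemax m this) hme
  · apply Finset.le_max'
    simp only [candW, mem_filter, mem_univ, true_and]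
    refine ⟨h.heC, ?_⟩
    by_cases he0 : e.val = 0
    · exact Or.inl he0
    · right
      have hpe : prv e < e := by rw [Fin.lt_def]; simp only [prv_val]; omega
      have hrw : bwd T Q e C (prv e) = Q (prv e) := bwd_lt hpe
      rw [hrw, ← h.hebot]
      exact h.hQm hpe.le

/-- first round trip -/
lemma rt1 (h : FwdCtx T B P c w) : bwd T (fwd B P c w) w c = P := by
  funext m
  by_cases h1 : m < w
  · rw [bwd_lt h1, fwd_lt h1]
  · have h1' : w ≤ m := not_lt.mp h1
    by_cases h2 : m < c
    · have hv : m.val + 1 < x := fin_succ_lt h2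
      have hnm : nxt m = ⟨m.val + 1, hv⟩ := nxt_pos hv
      have ha : w < nxt m := by
        rw [hnm, Fin.lt_def]; have := Fin.le_def.mp h1'; simp; omega
      have hb' : nxt m ≤ c := by
        rw [hnm, Fin.le_def]; have := Fin.lt_def.mp h2; simp; omega
      have hpn : prv (nxt m) = m := by rw [hnm]; exact Fin.ext (by simp)
      rw [bwd_mid h1' h2, fwd_mid ha hb', hpn]
    · by_cases h3 : m = c
      · rw [h3, bwd_at h.hwc, h.hctop]
      · have hc : c < m := lt_of_le_of_ne (not_lt.mp h2) (Ne.symm h3)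
        rw [bwd_gt h.hwc hc, fwd_gt h.hwc hc]

/-- second round trip -/
lemma rt2 (h : BwdCtx T B Q e C) : fwd B (bwd T Q e C) C e = Q := by
  funext m
  by_cases h1 : m < e
  · rw [fwd_lt h1, bwd_lt h1]
  · by_cases h2 : m = e
    · rw [h2, fwd_at, h.hebot]
    · have h1' : e < m := lt_of_le_of_ne (not_lt.mp h1) (Ne.symm h2)
      by_cases h3 : m ≤ C
      · have hv1 : e ≤ prv m := by
          rw [Fin.le_def]; have := Fin.lt_def.mp h1'; simp only [prv_val]; omega
        have hv2 : prv m < C := by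
          rw [Fin.lt_def]; have := Fin.le_def.mp h3; have := Fin.lt_def.mp h1'
          simp only [prv_val]; omega
        have hpn : nxt (prv m) = m := by
          have hlt : (prv m).val + 1 < x := by
            simp only [prv_val]; have := m.isLt; have := Fin.lt_def.mp h1'; omega
          rw [nxt_pos hlt]; exact Fin.ext (by
            simp only [Fin.val_mk, prv_val]; have := Fin.lt_def.mp h1'; omega)
        rw [fwd_mid h1' h3, bwd_mid hv1 hv2, hpn]
      · have hc : C < m := not_le.mp h3
        rw [fwd_gt h.heC hc, bwd_gt h.heC hc]

end glue


section step
variable {T B : Fin x → Fin (y+1)}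

noncomputable def FStep (T B P : Fin x → Fin (y+1)) : Fin x → Fin (y+1) :=
  if hne : (topF T P).Nonempty then
    fwd B P ((topF T P).min' hne)
      ((candW B P ((topF T P).min' hne)).max' (candW_nonempty P _))
  else P

noncomputable def BStep (T B Q : Fin x → Fin (y+1)) : Fin x → Fin (y+1) :=
  if hne : (botF B Q).Nonempty then
    bwd T Q ((botF B Q).max' hne)
      ((candC T Q ((botF B Q).max' hne)).min' (candC_nonempty Q _))
  else Q

lemma FStep_spec (hT : Monotone T) (hB : Monotone B) (hs : ∀ m, B m < T m)
    {P : Fin x → Fin (y+1)} (hInP : InP T B P) (hsor : Sorted T B P)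
    (hne : (topF T P).Nonempty) :
    InP T B (FStep T B P) ∧ Sorted T B (FStep T B P)
    ∧ (topF T (FStep T B P)).card = (topF T P).card - 1
    ∧ (botF B (FStep T B P)).card = (botF B P).card + 1
    ∧ BStep T B (FStep T B P) = P := by
  have hF : FStep T B P = fwd B P ((topF T P).min' hne)
      ((candW B P ((topF T P).min' hne)).max' (candW_nonempty P _)) := dif_pos hne
  set c := (topF T P).min' hne with hcdef
  set w := (candW B P c).max' (candW_nonempty P c) with hwdef
  have ctx : FwdCtx T B P c w := mk_fwd_ctx hT hB hs hInP hsor hne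
  have htop : topF T (FStep T B P) = (topF T P).erase c := by
    rw [hF]; ext m
    rw [mem_topF, Finset.mem_erase, mem_topF, ctx.top_iff m]
    tauto
  have hbot : botF B (FStep T B P) = insert w (botF B P) := by
    rw [hF]; ext m
    rw [mem_botF, Finset.mem_insert, mem_botF, ctx.bot_iff m]
    tauto
  have hwnot : w ∉ botF B P := by
    rw [mem_botF]; intro hx
    exact absurd (ctx.factC hx) (lt_irrefl w)
  refine ⟨?_, ?_, ?_, ?_, ?_⟩
  · rw [hF]; exact ⟨ctx.mono, ctx.bounds⟩
  · rw [hF]; exact ctx.sorted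
  · rw [htop, Finset.card_erase_of_mem ((topF T P).min'_mem hne)]
  · rw [hbot, Finset.card_insert_of_notMem hwnot]
  · have hne' : (botF B (FStep T B P)).Nonempty := by
      rw [hbot]; exact ⟨w, Finset.mem_insert_self _ _⟩
    rw [hF] at hne' ⊢
    have he' : (botF B (fwd B P c w)).max' hne' = w := fwd_e_eq ctx hne'
    have key : ∀ (e : Fin x), e = w → ∀ (hc : (candC T (fwd B P c w) e).Nonempty),
        bwd T (fwd B P c w) e ((candC T (fwd B P c w) e).min' hc) = P := by
      intro e he hc; subst he
      rw [fwd_C_eq ctx hc]; exact rt1 ctx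
    rw [BStep, dif_pos hne']
    exact key _ he' _

lemma BStep_spec (hT : Monotone T) (hB : Monotone B) (hs : ∀ m, B m < T m)
    {Q : Fin x → Fin (y+1)} (hInP : InP T B Q) (hsor : Sorted T B Q)
    (hne : (botF B Q).Nonempty) :
    InP T B (BStep T B Q) ∧ Sorted T B (BStep T B Q)
    ∧ (topF T (BStep T B Q)).card = (topF T Q).card + 1
    ∧ (botF B (BStep T B Q)).card = (botF B Q).card - 1
    ∧ FStep T B (BStep T B Q) = Q := by
  have hF : BStep T B Q = bwd T Q ((botF B Q).max' hne)
      ((candC T Q ((botF B Q).max' hne)).min' (candC_nonempty Q _)) := dif_pos hne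
  set e := (botF B Q).max' hne with hedef
  set C := (candC T Q e).min' (candC_nonempty Q e) with hCdef
  have ctx : BwdCtx T B Q e C := mk_bwd_ctx hT hB hs hInP hsor hne
  have htop : topF T (BStep T B Q) = insert C (topF T Q) := by
    rw [hF]; ext m
    rw [mem_topF, Finset.mem_insert, mem_topF, ctx.top_iff m]
    tauto
  have hbot : botF B (BStep T B Q) = (botF B Q).erase e := by
    rw [hF]; ext m
    rw [mem_botF, Finset.mem_erase, mem_botF, ctx.bot_iff m]
    tauto
  have hCnot : C ∉ topF T Q := by
    rw [mem_topF]; intro hx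
    exact absurd (ctx.factD hx) (lt_irrefl C)
  refine ⟨?_, ?_, ?_, ?_, ?_⟩
  · rw [hF]; exact ⟨ctx.mono, ctx.bounds⟩
  · rw [hF]; exact ctx.sorted
  · rw [htop, Finset.card_insert_of_notMem hCnot]
  · rw [hbot, Finset.card_erase_of_mem ((botF B Q).max'_mem hne)]
  · have hne' : (topF T (BStep T B Q)).Nonempty := by
      rw [htop]; exact ⟨C, Finset.mem_insert_self _ _⟩
    rw [hF] at hne' ⊢
    have hc' : (topF T (bwd T Q e C)).min' hne' = C := bwd_c_eq ctx hne'
    have key : ∀ (c : Fin x), c = C → ∀ (hw : (candW B (bwd T Q e C) c).Nonempty),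
        fwd B (bwd T Q e C) c ((candW B (bwd T Q e C) c).max' hw) = Q := by
      intro c hcc hw; subst hcc
      rw [bwd_w_eq ctx hw]; exact rt2 ctx
    rw [FStep, dif_pos hne']
    exact key _ hc' _

/-- the sorted-path set with `i` top and `j` bottom contacts -/
noncomputable def AS (T B : Fin x → Fin (y+1)) (i j : ℕ) : Finset (Fin x → Fin (y+1)) :=
  univ.filter (fun P => InP T B P ∧ Sorted T B P ∧ (topF T P).card = i ∧ (botF B P).card = j)

lemma step_card (hT : Monotone T) (hB : Monotone B) (hs : ∀ m, B m < T m) (i j : ℕ) :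
    (AS T B (i+1) j).card = (AS T B i (j+1)).card := by
  apply Finset.card_bij' (fun P _ => FStep T B P) (fun Q _ => BStep T B Q)
  · intro P hP
    simp only [AS, mem_filter, mem_univ, true_and] at hP ⊢
    obtain ⟨h1, h2, h3, h4⟩ := hP
    have hne : (topF T P).Nonempty := Finset.card_pos.mp (by omega)
    obtain ⟨s1, s2, s3, s4, _⟩ := FStep_spec hT hB hs h1 h2 hne
    exact ⟨s1, s2, by omega, by omega⟩
  · intro Q hQ
    simp only [AS, mem_filter, mem_univ, true_and] at hQ ⊢
    obtain ⟨h1, h2, h3, h4⟩ := hQ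
    have hne : (botF B Q).Nonempty := Finset.card_pos.mp (by omega)
    obtain ⟨s1, s2, s3, s4, _⟩ := BStep_spec hT hB hs h1 h2 hne
    exact ⟨s1, s2, by omega, by omega⟩
  · intro P hP
    simp only [AS, mem_filter, mem_univ, true_and] at hP
    obtain ⟨h1, h2, h3, h4⟩ := hP
    have hne : (topF T P).Nonempty := Finset.card_pos.mp (by omega)
    exact (FStep_spec hT hB hs h1 h2 hne).2.2.2.2
  · intro Q hQ
    simp only [AS, mem_filter, mem_univ, true_and] at hQ
    obtain ⟨h1, h2, h3, h4⟩ := hQ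
    have hne : (botF B Q).Nonempty := Finset.card_pos.mp (by omega)
    exact (BStep_spec hT hB hs h1 h2 hne).2.2.2.2

/-- flatness of the sorted-path counts along diagonals -/
lemma AS_flat (hT : Monotone T) (hB : Monotone B) (hs : ∀ m, B m < T m) :
    ∀ j i, (AS T B i j).card = (AS T B (i+j) 0).card := by
  intro j
  induction j with
  | zero => intro i; rfl
  | succ n ih =>
    intro i
    have h1 : (AS T B i (n+1)).card = (AS T B (i+1) n).card := (step_card hT hB hs i n).symm
    rw [h1, ih (i+1)]
    have he : i + 1 + n = i + (n+1) := by omega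
    rw [he]

end step


lemma nat_card_pred (p : (Fin x → Fin (y+1)) → Prop) [DecidablePred p] :
    Nat.card {P : Fin x → Fin (y+1) // p P} = (univ.filter p).card := by
  rw [Nat.card_eq_fintype_card]
  convert Fintype.card_subtype p

lemma tcount (T P : Fin x → Fin (y+1)) : ccount T P = (topF T P).card := ccount_eq T P

lemma bcount (B P : Fin x → Fin (y+1)) : ccount B P = (botF B P).card := ccount_eq B P

end Stmt9

open Finset Stmt9 in
/-- The following are equivalent: (i) the number of paths in `P(T,B)` with `i` top
and `j` bottom contacts depends only on `i + j`; (ii) in every path of `P(T,B)`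
every bottom contact occurs strictly before every top contact; (iii) the last
east step of `B` is strictly lower than the first east step of `T`. -/
theorem stmt9 {x y : ℕ} (hx : 1 ≤ x) (T B : Fin x → Fin (y+1))
    (hT : Monotone T) (hB : Monotone B) (hTB : ∀ j, B j ≤ T j) :
    List.TFAE [
      (∀ i j i' j' : ℕ, i + j = i' + j' →
        Nat.card {P : Fin x → Fin (y+1) // InP T B P ∧ ccount T P = i ∧ ccount B P = j}
        = Nat.card {P : Fin x → Fin (y+1) // InP T B P ∧ ccount T P = i' ∧ ccount B P = j'}),
      (∀ P : Fin x → Fin (y+1), InP T B P →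
        ∀ j1 j2 : Fin x, P j1 = B j1 → P j2 = T j2 → j1 < j2),
      (B ⟨x - 1, by omega⟩ < T ⟨0, by omega⟩)] := by
  classical
  set z : Fin x := ⟨0, by omega⟩ with hzdef
  set l : Fin x := ⟨x - 1, by omega⟩ with hldef
  have hzle : ∀ j : Fin x, z ≤ j := fun j => by
    rw [Fin.le_def]; simp [hzdef]
  have hlle : ∀ j : Fin x, j ≤ l := fun j => by
    rw [Fin.le_def]; have := j.isLt; simp [hldef]; omega
  tfae_have 3 → 2 := by
    intro h3 P hP j1 j2 hb ht
    by_contra hlt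
    have h21 : j2 ≤ j1 := not_lt.mp hlt
    have : T z ≤ B l :=
      calc T z ≤ T j2 := hT (hzle j2)
        _ = P j2 := ht.symm
        _ ≤ P j1 := hP.1 h21
        _ = B j1 := hb
        _ ≤ B l := hB (hlle j1)
    exact absurd h3 (not_lt.mpr this)
  tfae_have 2 → 1 := by
    intro h2 i j i' j' hsum
    have hInB : InP T B B := ⟨hB, fun j => ⟨le_refl _, hTB j⟩⟩
    have hs : ∀ m, B m < T m := by
      intro m
      rcases lt_or_eq_of_le (hTB m) with h | h
      · exact h
      · exact absurd (h2 B hInB m m rfl h) (lt_irrefl m)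
    have hset : ∀ i j : ℕ,
        Nat.card {P : Fin x → Fin (y+1) // InP T B P ∧ ccount T P = i ∧ ccount B P = j}
        = (AS T B i j).card := by
      intro i j
      rw [nat_card_pred]
      congr 1
      ext P
      simp only [mem_filter, mem_univ, true_and, AS]
      constructor
      · rintro ⟨h1', h2', h3'⟩
        exact ⟨h1', h2 P h1', by rw [← tcount]; exact h2', by rw [← bcount]; exact h3'⟩
      · rintro ⟨h1', _, h3', h4'⟩
        exact ⟨h1', by rw [tcount]; exact h3', by rw [bcount]; exact h4'⟩
    rw [hset i j, hset i' j', AS_flat hT hB hs j i, AS_flat hT hB hs j' i', hsum]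
  tfae_have 1 → 3 := by
    intro h1
    by_contra h3
    have hTB0 : T z ≤ B l := not_lt.mp h3
    have key : ∀ i j i' j' : ℕ, i + j = i' + j' →
        (univ.filter (fun P : Fin x → Fin (y+1) =>
          InP T B P ∧ ccount T P = i ∧ ccount B P = j)).card
        = (univ.filter (fun P : Fin x → Fin (y+1) =>
          InP T B P ∧ ccount T P = i' ∧ ccount B P = j')).card := by
      intro i j i' j' h
      rw [← nat_card_pred, ← nat_card_pred]
      exact h1 i j i' j' h
    by_cases hpinch : ∃ m, B m = T m
    · -- pinched board: compare (x, p) with (x + p, 0)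
      obtain ⟨m0, hm0⟩ := hpinch
      have hInT : InP T B T := ⟨hT, fun j => ⟨hTB j, le_refl _⟩⟩
      have hTx : ccount T T = x := by
        rw [tcount]
        have h5 : topF T T = univ := filter_true_of_mem (fun _ _ => rfl)
        rw [h5, card_univ, Fintype.card_fin]
      set p := ccount B T with hpdef
      have hp1 : 1 ≤ p := by
        rw [hpdef, bcount]
        have hm : m0 ∈ botF B T := mem_botF.mpr hm0.symm
        have := Finset.card_pos.mpr ⟨m0, hm⟩
        omega
      have hkey := key x p (x + p) 0 rfl
      have hmemT : T ∈ univ.filter (fun P : Fin x → Fin (y+1) =>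
          InP T B P ∧ ccount T P = x ∧ ccount B P = p) := by
        rw [Finset.mem_filter]
        exact ⟨Finset.mem_univ _, hInT, hTx, hpdef.symm⟩
      have hpos := Finset.card_pos.mpr ⟨T, hmemT⟩
      have hempty : (univ.filter (fun P : Fin x → Fin (y+1) =>
          InP T B P ∧ ccount T P = x + p ∧ ccount B P = 0)).card = 0 := by
        rw [Finset.card_eq_zero]
        ext P
        simp only [mem_filter, mem_univ, true_and, Finset.notMem_empty, iff_false]
        rintro ⟨_, hc, _⟩
        have hle : ccount T P ≤ x := by
          rw [tcount]
          calc (topF T P).card ≤ (univ : Finset (Fin x)).card :=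
                Finset.card_le_card (filter_subset _ _)
            _ = x := by rw [card_univ, Fintype.card_fin]
        omega
      omega
    · -- strict board: compare (i0, j0) with (i0 + j0, 0)
      push_neg at hpinch
      have hs : ∀ m, B m < T m := fun m => lt_of_le_of_ne (hTB m) (hpinch m)
      set Ps : Fin x → Fin (y+1) := fun j => max (T z) (B j) with hPsdef
      have hInPs : InP T B Ps := by
        constructor
        · intro a b hab
          exact max_le_max (le_refl _) (hB hab)
        · intro j
          exact ⟨le_max_right _ _, max_le (hT (hzle j)) (hTB j)⟩
      have hPsz : Ps z = T z := max_eq_left (hTB z)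
      have hPsl : Ps l = B l := max_eq_right hTB0
      set i0 := ccount T Ps with hi0def
      set j0 := ccount B Ps with hj0def
      have hnots : ¬ Sorted T B Ps := by
        intro hsor
        have := hsor l z hPsl hPsz
        rw [Fin.lt_def] at this
        simp [hzdef, hldef] at this
      have hkey := key i0 j0 (i0 + j0) 0 rfl
      set F : Finset (Fin x → Fin (y+1)) := univ.filter
        (fun P => InP T B P ∧ ccount T P = i0 ∧ ccount B P = j0) with hFdef
      have hsplit := Finset.card_filter_add_card_filter_not
        (s := F) (p := fun P => Sorted T B P)
      have hFS : F.filter (fun P => Sorted T B P) = AS T B i0 j0 := by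
        ext P
        simp only [hFdef, AS, mem_filter, mem_univ, true_and, and_assoc]
        constructor
        · rintro ⟨a, b, c, d⟩
          exact ⟨a, d, by rw [← tcount]; exact b, by rw [← bcount]; exact c⟩
        · rintro ⟨a, b, c, d⟩
          exact ⟨a, by rw [tcount]; exact c, by rw [bcount]; exact d, b⟩
      have hPsF : Ps ∈ F.filter (fun P => ¬ Sorted T B P) := by
        rw [Finset.mem_filter]
        refine ⟨?_, hnots⟩
        rw [hFdef, Finset.mem_filter]
        exact ⟨Finset.mem_univ _, hInPs, rfl, rfl⟩
      have hneg1 : 1 ≤ (F.filter (fun P => ¬ Sorted T B P)).card :=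
        Finset.card_pos.mpr ⟨Ps, hPsF⟩
      have hright : (univ.filter (fun P : Fin x → Fin (y+1) =>
          InP T B P ∧ ccount T P = i0 + j0 ∧ ccount B P = 0)).card
          = (AS T B (i0 + j0) 0).card := by
        congr 1
        ext P
        simp only [AS, mem_filter, mem_univ, true_and]
        constructor
        · rintro ⟨a, b, c⟩
          have hb0 : (botF B P).card = 0 := by rw [← bcount]; exact c
          have hbe : botF B P = ∅ := Finset.card_eq_zero.mp hb0
          refine ⟨a, ?_, by rw [← tcount]; exact b, hb0⟩
          intro j1 j2 hj1 _
          exfalso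
          have hmem : j1 ∈ botF B P := mem_botF.mpr hj1
          rw [hbe] at hmem
          exact Finset.notMem_empty _ hmem
        · rintro ⟨a, _, c, d⟩
          exact ⟨a, by rw [tcount]; exact c, by rw [bcount]; exact d⟩
      have hflat : (AS T B (i0 + j0) 0).card = (AS T B i0 j0).card :=
        (AS_flat hT hB hs j0 i0).symm
      rw [hright, hflat, ← hFS] at hkey
      omega
  tfae_finish
end

section
/- Let n ≥ 1 and r, s ∈ ℕ. Let x = n + s, y = n + r, T j = n + r for all j ∈ Fin (n+s) (the boundary T = N^{n+r} E^{n+s}), and B j = 0 for j < s, B j = j − s + 1 for s ≤ j < n + s (the boundary B = E^s (N E)^n N^r). Then the cardinality of P(T,B) equals binomial(2n+r+s, n+s) − binomial(2n+r+s, n−1). -/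
/-- `h` is a good path for parameter `s`: monotone and above the staircase. -/
def GoodPath (s : ℕ) {x y : ℕ} (h : Fin x → Fin (y+1)) : Prop :=
  Monotone h ∧ ∀ j : Fin x, (if (j:ℕ) < s then 0 else (j:ℕ) - s + 1) ≤ (h j : ℕ)

/-- Number of good paths. -/
noncomputable def Np (s x y : ℕ) : ℕ :=
  Nat.card {h : Fin x → Fin (y+1) // GoodPath s h}

lemma Np_zero (s y : ℕ) : Np s 0 y = 1 := by
  rw [Np, Nat.card_eq_one_iff_unique]
  constructor
  · exact ⟨fun a b => by ext j; exact absurd j.2 (Nat.not_lt_zero _)⟩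
  · exact ⟨⟨fun j => j.elim0, fun a b hab => a.elim0, fun j => j.elim0⟩⟩

lemma Np_y_zero (s x : ℕ) (hx : x ≤ s) : Np s x 0 = 1 := by
  rw [Np, Nat.card_eq_one_iff_unique]
  constructor
  · exact ⟨fun a b => by ext j; have := (a.1 j).2; have := (b.1 j).2; omega⟩
  · refine ⟨⟨fun _ => 0, monotone_const, fun j => ?_⟩⟩
    have : (j : ℕ) < s := lt_of_lt_of_le j.2 hx
    simp [this]

lemma Np_empty (s x y : ℕ) (hxy : y + s < x) : Np s x y = 0 := by
  rw [Np, Nat.card_eq_zero]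
  left
  constructor
  rintro ⟨h, _, hb⟩
  have hx : 0 < x := by omega
  have hj := hb ⟨x - 1, by omega⟩
  have hy := (h ⟨x - 1, by omega⟩).2
  simp only at hj
  rw [if_neg (by omega)] at hj
  omega

lemma Np_rec (s x y : ℕ) (hxs : x ≤ y + s) :
    Np s (x+1) (y+1) = Np s x (y+1) + Np s (x+1) y := by
  classical
  rw [Np, Np, Np]
  rw [← Nat.card_congr (Equiv.sumCompl
    (fun h : {h : Fin (x+1) → Fin (y+2) // GoodPath s h} =>
      h.1 (Fin.last x) = Fin.last (y+1)))]
  rw [Nat.card_sum]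
  congr 1
  · -- top part: h(last) = last ≃ paths of length x
    refine Nat.card_congr ?_
    refine ⟨fun h => ⟨fun j => h.1.1 j.castSucc, ?_, ?_⟩,
            fun g => ⟨⟨Fin.snoc g.1 (Fin.last (y+1)), ?_, ?_⟩, ?_⟩, ?_, ?_⟩
    · exact fun a b hab => h.1.2.1 (by simpa using hab)
    · intro j
      have := h.1.2.2 j.castSucc
      simpa using this
    · -- monotone of snoc
      intro a b hab
      rcases Fin.eq_castSucc_or_eq_last b with ⟨b', rfl⟩ | rfl
      · rcases Fin.eq_castSucc_or_eq_last a with ⟨a', rfl⟩ | rfl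
        · simp only [Fin.snoc_castSucc]
          exact g.2.1 (by simpa using hab)
        · have : b'.castSucc = Fin.last x := le_antisymm (Fin.le_last _) hab
          rw [this]
      · rcases Fin.eq_castSucc_or_eq_last a with ⟨a', rfl⟩ | rfl
        · simp only [Fin.snoc_castSucc, Fin.snoc_last]
          exact Fin.le_last _
        · exact le_refl _
    · -- staircase of snoc
      intro j
      rcases Fin.eq_castSucc_or_eq_last j with ⟨j', rfl⟩ | rfl
      · simp only [Fin.snoc_castSucc, Fin.coe_castSucc]
        exact g.2.2 j'
      · simp only [Fin.snoc_last, Fin.val_last]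
        split <;> omega
    · simp only [Fin.snoc_last]
    · intro h
      ext j
      rcases Fin.eq_castSucc_or_eq_last j with ⟨j', rfl⟩ | rfl
      · simp
      · simp [h.2]
    · intro g
      ext j
      simp
  · -- lower part: h(last) < last ≃ paths into Fin (y+1)
    refine Nat.card_congr ?_
    have key : ∀ (h : {h : Fin (x+1) → Fin (y+2) // GoodPath s h}),
        ¬ h.1 (Fin.last x) = Fin.last (y+1) → ∀ j, (h.1 j : ℕ) < y + 1 := by
      intro h hne j
      have h1 : h.1 j ≤ h.1 (Fin.last x) := h.2.1 (Fin.le_last j)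
      have h2 : (h.1 (Fin.last x) : ℕ) < y + 1 := by
        have := (h.1 (Fin.last x)).2
        have : (h.1 (Fin.last x) : ℕ) ≠ y + 1 := fun hc => hne (Fin.ext (by simpa using hc))
        omega
      exact lt_of_le_of_lt h1 h2
    refine ⟨fun h => ⟨fun j => ⟨(h.1.1 j : ℕ), key h.1 h.2 j⟩, ?_, ?_⟩,
            fun g => ⟨⟨fun j => (g.1 j).castSucc, ?_, ?_⟩, ?_⟩, ?_, ?_⟩
    · intro a b hab
      have := h.1.2.1 hab
      exact this
    · intro j
      have := h.1.2.2 j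
      simpa using this
    · intro a b hab
      have := g.2.1 hab
      exact this
    · intro j
      have := g.2.2 j
      simpa using this
    · intro hc
      have := congrArg (Fin.val) hc
      simp only [Fin.coe_castSucc, Fin.val_last] at this
      have := (g.1 (Fin.last x)).2
      omega
    · intro h
      ext j
      simp
    · intro g
      ext j
      simp

lemma Np_formula (s : ℕ) : ∀ k x y, x + y = k → x ≤ y + s + 1 →
    Np s x y + (x + y).choose (y + s + 1) = (x + y).choose x := by
  intro k
  induction k using Nat.strong_induction_on with
  | _ k ih =>
    intro x y hk hxs
    match x, y with
    | 0, y =>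
      rw [Np_zero]
      rw [Nat.choose_eq_zero_of_lt (by omega)]
      simp
    | x+1, 0 =>
      rcases Nat.lt_or_ge (x+1) (s+1) with h | h
      · rw [Np_y_zero s (x+1) (by omega), Nat.choose_eq_zero_of_lt (by omega),
          Nat.choose_self]
      · have hxe : x + 1 = s + 1 := by omega
        rw [Np_empty s (x+1) 0 (by omega)]
        rw [hxe]
        simp
    | x+1, y+1 =>
      rcases Nat.lt_or_ge (y + 1 + s) (x + 1) with h | h
      · -- boundary case x = y + s + 1
        have hxe : x + 1 = y + 1 + s + 1 := by omega
        rw [Np_empty s (x+1) (y+1) (by omega)]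
        rw [hxe]
        simp
      · -- interior: use recurrence
        have h1 := ih (x + y + 1) (by omega) x (y+1) (by omega) (by omega)
        have h2 := ih (x + y + 1) (by omega) (x+1) y (by omega) (by omega)
        rw [show x + (y+1) = x + y + 1 from by omega,
          show y + 1 + s + 1 = y + s + 1 + 1 from by omega] at h1
        rw [show x + 1 + y = x + y + 1 from by omega] at h2
        have p1 := Nat.choose_succ_succ' (x + y + 1) x
        have p2 := Nat.choose_succ_succ' (x + y + 1) (y + s + 1)
        rw [Np_rec s x y (by omega)]
        rw [show x + 1 + (y + 1) = x + y + 1 + 1 from by omega,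
          show y + 1 + s + 1 = y + s + 1 + 1 from by omega]
        omega

/-- For `T = N^{n+r} E^{n+s}` and `B = E^s (N E)^n N^r`, the number of paths in
`P(T,B)` is `C(2n+r+s, n+s) − C(2n+r+s, n−1)`. -/
theorem stmt11 (n r s : ℕ) (hn : 1 ≤ n)
    (T B : Fin (n+s) → Fin ((n+r)+1))
    (hT : ∀ j, (T j : ℕ) = n + r)
    (hB : ∀ j, (B j : ℕ) = if (j : ℕ) < s then 0 else (j : ℕ) - s + 1) :
    Nat.card {h : Fin (n+s) → Fin ((n+r)+1) // InP T B h}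
    = Nat.choose (2*n+r+s) (n+s) - Nat.choose (2*n+r+s) (n-1) := by
  have hcong : Nat.card {h : Fin (n+s) → Fin ((n+r)+1) // InP T B h}
      = Np s (n+s) (n+r) := by
    rw [Np]
    refine Nat.card_congr (Equiv.subtypeEquivRight ?_)
    intro h
    constructor
    · rintro ⟨hm, hb⟩
      refine ⟨hm, fun j => ?_⟩
      have := (hb j).1
      rw [Fin.le_def, hB j] at this
      exact this
    · rintro ⟨hm, hb⟩
      refine ⟨hm, fun j => ⟨?_, ?_⟩⟩
      · rw [Fin.le_def, hB j]; exact hb j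
      · rw [Fin.le_def, hT j]; exact Nat.lt_succ_iff.mp (h j).2
  have hf := Np_formula s (n + s + (n + r)) (n+s) (n+r) rfl (by omega)
  have hsym : (n + s + (n + r)).choose (n + r + s + 1)
      = (n + s + (n + r)).choose (n - 1) := by
    have := Nat.choose_symm (n := n + s + (n + r)) (k := n + r + s + 1) (by omega)
    rw [← this]
    congr 1
    omega
  have e1 : n + s + (n + r) = 2*n + r + s := by omega
  rw [hcong]
  rw [e1] at hf hsym
  omega
end

section
/- Assume k ≥ 1 and T j = y for all j ∈ Fin x (the boundary T = N^y E^x). Then the cardinality of P^k(T,B) equals the number of k-flagged semistandard Young tableaux of shape λ(T,B). -/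
open Finset

/-- A `k`-tuple of paths lies in `P^k(T,B)`: every path lies in `P(T,B)` and
each path lies weakly above the next one. -/
def InPk {x y k : ℕ} (T B : Fin x → Fin (y+1)) (P : Fin k → Fin x → Fin (y+1)) : Prop :=
  (∀ i, InP T B (P i)) ∧
  ∀ (i : Fin k) (hi : (i : ℕ) + 1 < k) (j : Fin x), P ⟨(i : ℕ) + 1, hi⟩ j ≤ P i j

/-- `lam B r` is the length of row `r+1` (rows numbered `1,…,y` from the top) of
the Young diagram `λ(T,B)` bounded by `T = N^y E^x` and `B`. -/
noncomputable def lam {x y : ℕ} (B : Fin x → Fin (y+1)) (r : Fin y) : ℕ :=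
  Nat.card {j : Fin x // (B j : ℕ) ≤ y - ((r : ℕ) + 1)}

/-- A `k`-flagged semistandard Young tableau of shape `λ(T,B)`, encoded as a
function on the `y × x` grid: entries inside the diagram are positive, at most
`k + row`, weakly increasing along rows and strictly increasing down columns;
entries outside the diagram are normalized to `0`. -/
def IsFlaggedSSYT {x y : ℕ} (k : ℕ) (B : Fin x → Fin (y+1)) (S : Fin y → Fin x → ℕ) : Prop :=
  (∀ (r : Fin y) (c : Fin x), (c : ℕ) < lam B r → 1 ≤ S r c ∧ S r c ≤ k + (r : ℕ) + 1) ∧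
  (∀ (r : Fin y) (c c' : Fin x), c ≤ c' → (c' : ℕ) < lam B r → S r c ≤ S r c') ∧
  (∀ (r r' : Fin y) (c : Fin x), (r : ℕ) + 1 = (r' : ℕ) → (c : ℕ) < lam B r' → S r c < S r' c) ∧
  (∀ (r : Fin y) (c : Fin x), lam B r ≤ (c : ℕ) → S r c = 0)

section Aux

lemma cardFinLt (n m : ℕ) : (univ.filter fun i : Fin n => (i:ℕ) < m).card = min m n := by
  rw [← Finset.card_range (min m n), ← Finset.card_image_of_injective _ Fin.val_injective]
  congr 1
  ext j
  simp only [Finset.mem_image, Finset.mem_filter, Finset.mem_univ, true_and, Finset.mem_range]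
  constructor
  · rintro ⟨i, hi, rfl⟩; omega
  · intro hj; exact ⟨⟨j, by omega⟩, by simp only [Fin.val_mk]; omega, rfl⟩

lemma cardFinGe (n m : ℕ) : (univ.filter fun i : Fin n => m ≤ (i:ℕ)).card = n - m := by
  have h := Finset.card_filter_add_card_filter_not (s := (univ : Finset (Fin n)))
    (p := fun i : Fin n => (i:ℕ) < m)
  simp only [not_lt] at h
  have := cardFinLt n m
  simp only [Finset.card_univ, Fintype.card_fin] at h
  omega

lemma lowerSet_mem_iff {n : ℕ} (s : Finset (Fin n))
    (hs : ∀ a b : Fin n, a ≤ b → b ∈ s → a ∈ s) (c : Fin n) :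
    c ∈ s ↔ (c:ℕ) < s.card := by
  constructor
  · intro hc
    have hsub : Finset.Iic c ⊆ s := fun b hb => hs b c (Finset.mem_Iic.mp hb) hc
    have := Finset.card_le_card hsub
    rw [Fin.card_Iic] at this
    omega
  · intro hc
    by_contra hcs
    have hsub : s ⊆ Finset.Iio c := by
      intro b hb
      rw [Finset.mem_Iio]
      by_contra hbc
      exact hcs (hs c b (not_lt.mp hbc) hb)
    have := Finset.card_le_card hsub
    rw [Fin.card_Iio] at this
    omega

lemma upperSet_mem_iff {n : ℕ} (s : Finset (Fin n))
    (hs : ∀ a b : Fin n, a ≤ b → a ∈ s → b ∈ s) (c : Fin n) :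
    c ∈ s ↔ n - s.card ≤ (c:ℕ) := by
  have hcomp : ∀ d : Fin n, d ∈ sᶜ ↔ (d:ℕ) < sᶜ.card := by
    apply lowerSet_mem_iff
    intro a b hab hb
    simp only [Finset.mem_compl] at hb ⊢
    exact fun ha => hb (hs a b hab ha)
  have hcard : sᶜ.card = n - s.card := by
    rw [Finset.card_compl]; simp
  have h := hcomp c
  rw [hcard] at h
  simp only [Finset.mem_compl] at h
  have hsc : s.card ≤ n := by simpa using Finset.card_le_univ s
  constructor
  · intro hc
    have := h.not.mp (by simpa using hc)
    omega
  · intro hc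
    by_contra hcs
    have := h.mp hcs
    omega

variable {x y k : ℕ}

lemma lam_eq (B : Fin x → Fin (y+1)) (r : Fin y) :
    lam B r = (univ.filter fun j : Fin x => (B j:ℕ) ≤ y - ((r:ℕ)+1)).card := by
  rw [lam, Nat.card_eq_fintype_card, Fintype.card_subtype]

lemma lam_lt_iff {B : Fin x → Fin (y+1)} (hB : Monotone B) (r : Fin y) (c : Fin x) :
    (c:ℕ) < lam B r ↔ (B c:ℕ) ≤ y - ((r:ℕ)+1) := by
  rw [lam_eq]
  have := lowerSet_mem_iff (univ.filter fun j : Fin x => (B j:ℕ) ≤ y - ((r:ℕ)+1))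
    (by
      intro a b hab hb
      simp only [Finset.mem_filter, Finset.mem_univ, true_and] at hb ⊢
      have : (B a : ℕ) ≤ (B b : ℕ) := hB hab
      omega) c
  simp only [Finset.mem_filter, Finset.mem_univ, true_and] at this
  exact this.symm

lemma lam_anti (B : Fin x → Fin (y+1)) {r r' : Fin y} (h : r ≤ r') : lam B r' ≤ lam B r := by
  rw [lam_eq, lam_eq]
  apply Finset.card_le_card
  intro j hj
  simp only [Finset.mem_filter, Finset.mem_univ, true_and] at hj ⊢
  have : (r:ℕ) ≤ (r':ℕ) := h
  omega

/-- the forward map: paths to tableaux -/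
noncomputable def Fmap (B : Fin x → Fin (y+1)) (P : Fin k → Fin x → Fin (y+1)) :
    Fin y → Fin x → ℕ :=
  fun r c => if (c:ℕ) < lam B r then
    (r:ℕ) + 1 + (univ.filter fun i : Fin k => y - (r:ℕ) ≤ (P i c : ℕ)).card else 0

/-- auxiliary entry count -/
noncomputable def nval (k : ℕ) (B : Fin x → Fin (y+1)) (S : Fin y → Fin x → ℕ)
    (r : Fin y) (c : Fin x) : ℕ :=
  if (c:ℕ) < lam B r then S r c - ((r:ℕ)+1) else k

/-- the backward map: tableaux to paths -/
noncomputable def Gmap (k : ℕ) (B : Fin x → Fin (y+1)) (S : Fin y → Fin x → ℕ) :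
    Fin k → Fin x → Fin (y+1) :=
  fun i c => ⟨(univ.filter fun r : Fin y => (i:ℕ)+1 ≤ nval k B S r c).card, by
    have h := Finset.card_filter_le (univ : Finset (Fin y))
      (fun r : Fin y => (i:ℕ)+1 ≤ nval k B S r c)
    simp only [Finset.card_univ, Fintype.card_fin] at h
    omega⟩

/-- paths in a tuple are antitone in the index -/
lemma P_anti {P : Fin k → Fin x → Fin (y+1)}
    (h2 : ∀ (i : Fin k) (hi : (i : ℕ) + 1 < k) (j : Fin x), P ⟨(i : ℕ) + 1, hi⟩ j ≤ P i j)
    (a b : Fin k) (hab : a ≤ b) (j : Fin x) : P b j ≤ P a j := by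
  suffices H : ∀ d (a : Fin k) (hd : (a:ℕ) + d < k), P ⟨(a:ℕ) + d, hd⟩ j ≤ P a j by
    have hb : (b:ℕ) = (a:ℕ) + ((b:ℕ) - (a:ℕ)) := by
      have : (a:ℕ) ≤ (b:ℕ) := hab
      omega
    have := H ((b:ℕ) - (a:ℕ)) a (by omega)
    convert this using 2
    exact Fin.ext hb
  intro d
  induction d with
  | zero => intro a hd; exact le_of_eq (congrFun (congrArg P (Fin.ext (by simp))) j)
  | succ d ih =>
    intro a hd
    have h1 : P ⟨(a:ℕ) + (d+1), hd⟩ j ≤ P ⟨(a:ℕ) + d, by omega⟩ j := by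
      have := h2 ⟨(a:ℕ) + d, by omega⟩ (by simp only [Fin.val_mk]; omega) j
      convert this using 2
      exact Fin.ext (by simp only [Fin.val_mk]; omega)
    exact le_trans h1 (ih a (by omega))

end Aux

section Main

variable {x y k : ℕ} {T B : Fin x → Fin (y+1)}

lemma Fmap_flagged (hB : Monotone B) (hT : ∀ j, (T j : ℕ) = y)
    {P : Fin k → Fin x → Fin (y+1)} (hP : InPk T B P) :
    IsFlaggedSSYT k B (Fmap B P) := by
  obtain ⟨h1, h2⟩ := hP
  refine ⟨?_, ?_, ?_, ?_⟩
  · intro r c hc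
    rw [Fmap, if_pos hc]
    have hcard : (univ.filter fun i : Fin k => y - (r:ℕ) ≤ (P i c : ℕ)).card ≤ k := by
      have h := Finset.card_filter_le (univ : Finset (Fin k))
        (fun i : Fin k => y - (r:ℕ) ≤ (P i c : ℕ))
      simpa using h
    omega
  · intro r c c' hcc hc'
    have hc : (c:ℕ) < lam B r := lt_of_le_of_lt (by exact_mod_cast hcc) hc'
    simp only [Fmap, if_pos hc, if_pos hc']
    have : (univ.filter fun i : Fin k => y - (r:ℕ) ≤ (P i c : ℕ)).card
        ≤ (univ.filter fun i : Fin k => y - (r:ℕ) ≤ (P i c' : ℕ)).card := by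
      apply Finset.card_le_card
      intro i hi
      simp only [Finset.mem_filter, Finset.mem_univ, true_and] at hi ⊢
      have : (P i c : ℕ) ≤ (P i c' : ℕ) := (h1 i).1 hcc
      omega
    omega
  · intro r r' c hrr hc'
    have hrle : r ≤ r' := by
      rw [Fin.le_def]; omega
    have hc : (c:ℕ) < lam B r := lt_of_lt_of_le hc' (lam_anti B hrle)
    simp only [Fmap, if_pos hc, if_pos hc']
    have hsub : (univ.filter fun i : Fin k => y - (r:ℕ) ≤ (P i c : ℕ)).card
        ≤ (univ.filter fun i : Fin k => y - (r':ℕ) ≤ (P i c : ℕ)).card := by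
      apply Finset.card_le_card
      intro i hi
      simp only [Finset.mem_filter, Finset.mem_univ, true_and] at hi ⊢
      omega
    omega
  · intro r c hc
    rw [Fmap, if_neg (not_lt.mpr hc)]

lemma nval_mono_c {S : Fin y → Fin x → ℕ} (hS : IsFlaggedSSYT k B S)
    (r : Fin y) {c c' : Fin x} (hcc : c ≤ c') :
    nval k B S r c ≤ nval k B S r c' := by
  obtain ⟨hb, hrow, _, _⟩ := hS
  by_cases h' : (c':ℕ) < lam B r
  · have h : (c:ℕ) < lam B r := lt_of_le_of_lt (by exact_mod_cast hcc) h'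
    rw [nval, nval, if_pos h, if_pos h']
    have := hrow r c c' hcc h'
    omega
  · rw [nval, nval, if_neg h']
    by_cases h : (c:ℕ) < lam B r
    · rw [if_pos h]
      have := (hb r c h).2
      omega
    · rw [if_neg h]

lemma nval_mono_r {S : Fin y → Fin x → ℕ} (hS : IsFlaggedSSYT k B S)
    {r r' : Fin y} (hrr : r ≤ r') (c : Fin x) :
    nval k B S r c ≤ nval k B S r' c := by
  obtain ⟨hb, _, hcol, _⟩ := hS
  by_cases h' : (c:ℕ) < lam B r'
  · have hchain : ∀ d (r0 : Fin y) (hd : (r0:ℕ) + d < y),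
        (c:ℕ) < lam B ⟨(r0:ℕ) + d, hd⟩ → S r0 c + d ≤ S ⟨(r0:ℕ) + d, hd⟩ c := by
      intro d
      induction d with
      | zero =>
        intro r0 hd h
        have : (⟨(r0:ℕ) + 0, hd⟩ : Fin y) = r0 := Fin.ext (by simp)
        rw [this]; omega
      | succ d ih =>
        intro r0 hd h
        have hmid : (c:ℕ) < lam B ⟨(r0:ℕ) + d, by omega⟩ :=
          lt_of_lt_of_le h (lam_anti B (by rw [Fin.le_def]; simp))
        have h1 := ih r0 (by omega) hmid
        have h2 := hcol ⟨(r0:ℕ) + d, by omega⟩ ⟨(r0:ℕ) + (d+1), hd⟩ c (by simp; omega) h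
        omega
    have h : (c:ℕ) < lam B r := lt_of_lt_of_le h' (lam_anti B hrr)
    have hr : (r:ℕ) ≤ (r':ℕ) := hrr
    have hd : (r:ℕ) + ((r':ℕ) - (r:ℕ)) < y := by have := r'.isLt; omega
    have heq : (⟨(r:ℕ) + ((r':ℕ) - (r:ℕ)), hd⟩ : Fin y) = r' := Fin.ext (by simp only [Fin.val_mk]; omega)
    have hch := hchain ((r':ℕ) - (r:ℕ)) r hd (by rw [heq]; exact h')
    rw [heq] at hch
    rw [nval, nval, if_pos h, if_pos h']
    omega
  · rw [nval, nval, if_neg h']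
    by_cases h : (c:ℕ) < lam B r
    · rw [if_pos h]
      have := (hb r c h).2
      omega
    · rw [if_neg h]

lemma S_lower {S : Fin y → Fin x → ℕ} (hS : IsFlaggedSSYT k B S)
    {r : Fin y} {c : Fin x} (h : (c:ℕ) < lam B r) : (r:ℕ) + 1 ≤ S r c := by
  obtain ⟨hb, _, hcol, _⟩ := hS
  have hchain : ∀ d (hd : d < y), (c:ℕ) < lam B ⟨d, hd⟩ → d + 1 ≤ S ⟨d, hd⟩ c := by
    intro d
    induction d with
    | zero => intro hd hc; have := (hb ⟨0, hd⟩ c hc).1; omega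
    | succ d ih =>
      intro hd hc
      have hmid : (c:ℕ) < lam B ⟨d, by omega⟩ :=
        lt_of_lt_of_le hc (lam_anti B (by rw [Fin.le_def]; simp))
      have h1 := ih (by omega) hmid
      have h2 := hcol ⟨d, by omega⟩ ⟨d+1, hd⟩ c (by simp) hc
      omega
  exact hchain (r:ℕ) r.isLt h

lemma Gmap_inPk (hk : 1 ≤ k) (hB : Monotone B) (hT : ∀ j, (T j : ℕ) = y)
    {S : Fin y → Fin x → ℕ} (hS : IsFlaggedSSYT k B S) :
    InPk T B (Gmap k B S) := by
  constructor
  · intro i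
    constructor
    · intro c c' hcc
      rw [Fin.le_def]
      show (Gmap k B S i c : ℕ) ≤ (Gmap k B S i c' : ℕ)
      simp only [Gmap, Fin.val_mk]
      apply Finset.card_le_card
      intro r hr
      simp only [Finset.mem_filter, Finset.mem_univ, true_and] at hr ⊢
      exact le_trans hr (nval_mono_c hS r hcc)
    · intro c
      constructor
      · rw [Fin.le_def]
        show (B c : ℕ) ≤ (univ.filter fun r : Fin y => (i:ℕ)+1 ≤ nval k B S r c).card
        have hsub : (univ.filter fun r : Fin y => y - (B c : ℕ) ≤ (r:ℕ))
            ⊆ (univ.filter fun r : Fin y => (i:ℕ)+1 ≤ nval k B S r c) := by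
          intro r hr
          simp only [Finset.mem_filter, Finset.mem_univ, true_and] at *
          have hout : ¬ ((c:ℕ) < lam B r) := by
            rw [lam_lt_iff hB]
            have hr2 : (r:ℕ) < y := r.isLt
            have hBc : (B c : ℕ) ≤ y := by omega
            omega
          rw [nval, if_neg hout]
          have : (i:ℕ) < k := i.isLt
          omega
        have := Finset.card_le_card hsub
        rw [cardFinGe] at this
        have hBc : (B c : ℕ) ≤ y := by
          have := (B c).isLt; omega
        omega
      · rw [Fin.le_def, hT]
        show (univ.filter fun r : Fin y => (i:ℕ)+1 ≤ nval k B S r c).card ≤ y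
        have h := Finset.card_filter_le (univ : Finset (Fin y))
          (fun r : Fin y => (i:ℕ)+1 ≤ nval k B S r c)
        simpa using h
  · intro i hi c
    rw [Fin.le_def]
    show (Gmap k B S ⟨(i:ℕ)+1, hi⟩ c : ℕ) ≤ (Gmap k B S i c : ℕ)
    simp only [Gmap, Fin.val_mk]
    apply Finset.card_le_card
    intro r hr
    simp only [Finset.mem_filter, Finset.mem_univ, true_and, Fin.val_mk] at hr ⊢
    omega

lemma G_F (hk : 1 ≤ k) (hB : Monotone B) (hT : ∀ j, (T j : ℕ) = y)
    {P : Fin k → Fin x → Fin (y+1)} (hP : InPk T B P) :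
    Gmap k B (Fmap B P) = P := by
  obtain ⟨h1, h2⟩ := hP
  funext i c
  apply Fin.ext
  show (univ.filter fun r : Fin y => (i:ℕ)+1 ≤ nval k B (Fmap B P) r c).card = (P i c : ℕ)
  -- Step 1: nval of Fmap equals the count
  have hnval : ∀ r : Fin y, nval k B (Fmap B P) r c
      = (univ.filter fun i' : Fin k => y - (r:ℕ) ≤ (P i' c : ℕ)).card := by
    intro r
    by_cases h : (c:ℕ) < lam B r
    · rw [nval, if_pos h, Fmap, if_pos h]
      omega
    · rw [nval, if_neg h]
      symm
      have : (univ.filter fun i' : Fin k => y - (r:ℕ) ≤ (P i' c : ℕ)) = univ := by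
        apply Finset.filter_true_of_mem
        intro i' _
        have hBc := ((h1 i').2 c).1
        rw [Fin.le_def] at hBc
        rw [lam_lt_iff hB] at h
        have hr : (r:ℕ) < y := r.isLt
        omega
      rw [this]
      simp
  -- Step 2: pointwise characterization
  have hiff : ∀ r : Fin y, ((i:ℕ)+1 ≤ nval k B (Fmap B P) r c) ↔ (y - (r:ℕ) ≤ (P i c : ℕ)) := by
    intro r
    rw [hnval r]
    have := lowerSet_mem_iff (univ.filter fun i' : Fin k => y - (r:ℕ) ≤ (P i' c : ℕ))
      (by
        intro a b hab hb
        simp only [Finset.mem_filter, Finset.mem_univ, true_and] at hb ⊢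
        have := P_anti h2 a b hab c
        rw [Fin.le_def] at this
        omega) i
    simp only [Finset.mem_filter, Finset.mem_univ, true_and] at this
    omega
  have : (univ.filter fun r : Fin y => (i:ℕ)+1 ≤ nval k B (Fmap B P) r c)
      = (univ.filter fun r : Fin y => y - (P i c : ℕ) ≤ (r:ℕ)) := by
    apply Finset.filter_congr
    intro r _
    rw [hiff r]
    have hr : (r:ℕ) < y := r.isLt
    have hp : (P i c : ℕ) ≤ y := by have := (P i c).isLt; omega
    constructor <;> intro <;> omega
  rw [this, cardFinGe]
  have hp : (P i c : ℕ) ≤ y := by have := (P i c).isLt; omega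
  omega

lemma F_G (hk : 1 ≤ k) (hB : Monotone B)
    {S : Fin y → Fin x → ℕ} (hS : IsFlaggedSSYT k B S) :
    Fmap B (Gmap k B S) = S := by
  funext r c
  by_cases h : (c:ℕ) < lam B r
  · rw [Fmap, if_pos h]
    have hq : ∀ i : Fin k, (y - (r:ℕ) ≤ (Gmap k B S i c : ℕ)) ↔ ((i:ℕ)+1 ≤ nval k B S r c) := by
      intro i
      have hup := upperSet_mem_iff (univ.filter fun r' : Fin y => (i:ℕ)+1 ≤ nval k B S r' c)
        (by
          intro a b hab ha
          simp only [Finset.mem_filter, Finset.mem_univ, true_and] at ha ⊢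
          exact le_trans ha (nval_mono_r hS hab c)) r
      simp only [Finset.mem_filter, Finset.mem_univ, true_and] at hup
      have hcard : (Gmap k B S i c : ℕ)
          = (univ.filter fun r' : Fin y => (i:ℕ)+1 ≤ nval k B S r' c).card := rfl
      rw [← hcard] at hup
      have hqy : (Gmap k B S i c : ℕ) ≤ y := by
        have := (Gmap k B S i c).isLt; omega
      have hry : (r:ℕ) < y := r.isLt
      omega
    have hcount : (univ.filter fun i : Fin k => y - (r:ℕ) ≤ (Gmap k B S i c : ℕ))
        = (univ.filter fun i : Fin k => (i:ℕ) < nval k B S r c) := by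
      apply Finset.filter_congr
      intro i _
      rw [hq i]
      omega
    rw [hcount, cardFinLt]
    have hb := (hS.1 r c h).2
    have hlow := S_lower hS h
    rw [nval, if_pos h]
    omega
  · rw [Fmap, if_neg h]
    exact (hS.2.2.2 r c (not_lt.mp h)).symm

end Main

/-- For `T = N^y E^x`, the number of `k`-tuples in `P^k(T,B)` equals the number
of `k`-flagged SSYT of shape `λ(T,B)`. -/
theorem stmt16 {x y : ℕ} (k : ℕ) (hk : 1 ≤ k) (T B : Fin x → Fin (y+1))
    (hT : ∀ j, (T j : ℕ) = y) (hB : Monotone B) (hTB : ∀ j, B j ≤ T j) :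
    Nat.card {P : Fin k → Fin x → Fin (y+1) // InPk T B P}
    = Nat.card {S : Fin y → Fin x → ℕ // IsFlaggedSSYT k B S} := by
  apply Nat.card_congr
  exact {
    toFun := fun P => ⟨Fmap B P.1, Fmap_flagged hB hT P.2⟩
    invFun := fun S => ⟨Gmap k B S.1, Gmap_inPk hk hB hT S.2⟩
    left_inv := fun P => Subtype.ext (G_F hk hB hT P.2)
    right_inv := fun S => Subtype.ext (F_G hk hB S.2) }
end

section
/- For P ∈ P(T,B), let N̂(P) = {g_P(i) + i + 1 : i ∈ Fin y} ⊆ {1,…,x+y} be the set of positions of the north steps of P in its step sequence, and let 𝔅 = {N̂(Q) : Q ∈ P(T,B)} (the bases of the lattice path matroid of P(T,B)). Then for every P ∈ P(T,B): (a) for each i ∈ Fin y, there exists a position e ∈ {1,…,x+y} ∖ N̂(P) with e > g_P(i) + i + 1 and (N̂(P) ∖ {g_P(i)+i+1}) ∪ {e} ∈ 𝔅 if and only if g_P(i) ≠ g_B(i), i.e., the i-th north step of P is not a right contact; (b) for each j ∈ Fin x, noting that the (j+1)-st east step of P occupies position j + P j + 1 ∉ N̂(P), there exists a position m ∈ N̂(P)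 with m > j + P j + 1 and (N̂(P) ∖ {m}) ∪ {j + P j + 1} ∈ 𝔅 if and only if P j ≠ T j, i.e., that east step is not a top contact. (Equivalently: with respect to the reversed linear order on {1,…,x+y}, the internally active elements of the basis N̂(P) are exactly the right contacts of P and the externally active elements are exactly the top contacts of P.) -/
open Finset


/-- `Nhat P ⊆ {1,…,x+y}` is the set of positions of the north steps of `P` in its
step sequence: the `i`-th north step occupies position `gstat P i + i + 1`. -/
def Nhat {x y : ℕ} (P : Fin x → Fin (y+1)) : Set ℕ :=
  {m | ∃ i : Fin y, gstat P i + (i : ℕ) + 1 = m}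

/-- The bases of the lattice path matroid of `P(T,B)`. -/
def LPMBases {x y : ℕ} (T B : Fin x → Fin (y+1)) : Set (Set ℕ) :=
  {s | ∃ Q, InP T B Q ∧ Nhat Q = s}

lemma card_filter_coe_lt (n k : ℕ) (hk : k ≤ n) :
    (Finset.univ.filter fun t : Fin n => (t : ℕ) < k).card = k := by
  induction k with
  | zero => simp
  | succ k ih =>
    have h1 : (Finset.univ.filter fun t : Fin n => (t : ℕ) < k + 1)
        = insert ⟨k, hk⟩ (Finset.univ.filter fun t : Fin n => (t : ℕ) < k) := by
      ext t
      simp only [mem_filter, mem_univ, true_and, mem_insert, Fin.ext_iff]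
      omega
    rw [h1, Finset.card_insert_of_notMem (by simp), ih (by omega)]

variable {x y : ℕ}

lemma gstat_eq_card (P : Fin x → Fin (y+1)) (i : Fin y) :
    gstat P i = (Finset.univ.filter fun j : Fin x => (P j : ℕ) ≤ (i : ℕ)).card := by
  classical
  rw [gstat, Nat.card_eq_fintype_card, Fintype.card_subtype]

lemma gstat_le (P : Fin x → Fin (y+1)) (i : Fin y) : gstat P i ≤ x := by
  rw [gstat_eq_card]
  calc (Finset.univ.filter fun j : Fin x => (P j : ℕ) ≤ (i : ℕ)).card
      ≤ (Finset.univ : Finset (Fin x)).card := Finset.card_filter_le _ _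
    _ = x := by simp

lemma gstat_mono (P : Fin x → Fin (y+1)) {i i' : Fin y} (h : (i : ℕ) ≤ (i' : ℕ)) :
    gstat P i ≤ gstat P i' := by
  rw [gstat_eq_card, gstat_eq_card]
  exact Finset.card_le_card (fun j hj => by
    simp only [mem_filter, mem_univ, true_and] at *; omega)

lemma gstat_anti {P Q : Fin x → Fin (y+1)} (h : ∀ j, (P j : ℕ) ≤ (Q j : ℕ)) (i : Fin y) :
    gstat Q i ≤ gstat P i := by
  rw [gstat_eq_card, gstat_eq_card]
  exact Finset.card_le_card (fun j hj => by
    simp only [mem_filter, mem_univ, true_and] at *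
    exact le_trans (h j) hj)

lemma lt_gstat_iff {P : Fin x → Fin (y+1)} (hP : Monotone P) (i : Fin y) (j : Fin x) :
    (j : ℕ) < gstat P i ↔ (P j : ℕ) ≤ (i : ℕ) := by
  rw [gstat_eq_card]
  constructor
  · intro h
    by_contra hc
    push_neg at hc
    have hsub : (Finset.univ.filter fun j' : Fin x => (P j' : ℕ) ≤ (i : ℕ))
        ⊆ Finset.univ.filter fun t : Fin x => (t : ℕ) < (j : ℕ) := by
      intro j' hj'
      simp only [mem_filter, mem_univ, true_and] at *
      by_contra hcc
      push_neg at hcc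
      have := hP (show j ≤ j' from by rwa [Fin.le_def])
      rw [Fin.le_def] at this
      omega
    have h2 := Finset.card_le_card hsub
    rw [card_filter_coe_lt x j (le_of_lt j.2)] at h2
    omega
  · intro h
    have hsub : (Finset.univ.filter fun t : Fin x => (t : ℕ) < (j : ℕ) + 1)
        ⊆ Finset.univ.filter fun j' : Fin x => (P j' : ℕ) ≤ (i : ℕ) := by
      intro j' hj'
      simp only [mem_filter, mem_univ, true_and] at *
      have := hP (show j' ≤ j from by rw [Fin.le_def]; omega)
      rw [Fin.le_def] at this
      omega
    have h2 := Finset.card_le_card hsub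
    rw [card_filter_coe_lt x ((j : ℕ) + 1) j.2] at h2
    omega

lemma pos_strictMono (P : Fin x → Fin (y+1)) {i i' : Fin y} (h : (i : ℕ) < (i' : ℕ)) :
    gstat P i + (i : ℕ) + 1 < gstat P i' + (i' : ℕ) + 1 := by
  have := gstat_mono P (le_of_lt h)
  omega

lemma pos_inj (P : Fin x → Fin (y+1)) {i i' : Fin y}
    (h : gstat P i + (i : ℕ) + 1 = gstat P i' + (i' : ℕ) + 1) : i = i' := by
  rcases lt_trichotomy ((i : ℕ)) ((i' : ℕ)) with hlt | he | hlt
  · exact absurd h (by have := pos_strictMono P hlt; omega)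
  · exact Fin.ext he
  · exact absurd h (by have := pos_strictMono P hlt; omega)

lemma east_not_mem {P : Fin x → Fin (y+1)} (hP : Monotone P) (j : Fin x) :
    (j : ℕ) + (P j : ℕ) + 1 ∉ Nhat P := by
  rintro ⟨i, hi⟩
  rcases le_or_gt ((P j : ℕ)) (i : ℕ) with h | h
  · have := (lt_gstat_iff hP i j).2 h
    omega
  · have : ¬ ((j : ℕ) < gstat P i) := fun hc => by
      have := (lt_gstat_iff hP i j).1 hc; omega
    omega

lemma aFwd (T B : Fin x → Fin (y+1)) (hB : Monotone B)
    (P : Fin x → Fin (y+1)) (hPm : Monotone P) (hPb : ∀ j, B j ≤ P j ∧ P j ≤ T j)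
    (i : Fin y) (hne : gstat P i < gstat B i) :
    ∃ e : ℕ, 1 ≤ e ∧ e ≤ x + y ∧ e ∉ Nhat P ∧ gstat P i + (i : ℕ) + 1 < e ∧
      (Nhat P \ {gstat P i + (i : ℕ) + 1}) ∪ {e} ∈ LPMBases T B := by
  classical
  -- the block [i, k] of north steps with the same x-coordinate
  have hFne : i ∈ Finset.univ.filter fun t : Fin y => gstat P t = gstat P i := by simp
  set F := Finset.univ.filter fun t : Fin y => gstat P t = gstat P i with hF
  set k : Fin y := F.max' ⟨i, hFne⟩ with hkdef
  have hk1 : gstat P k = gstat P i := by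
    have := F.max'_mem ⟨i, hFne⟩
    simp only [hF, mem_filter, mem_univ, true_and] at this
    exact this
  have hk2 : (i : ℕ) ≤ (k : ℕ) := by
    have := F.le_max' i hFne
    rwa [Fin.le_def] at this
  have hk3 : ∀ t : Fin y, (k : ℕ) < (t : ℕ) → gstat P i + 1 ≤ gstat P t := by
    intro t ht
    have h1 : gstat P k ≤ gstat P t := gstat_mono P (le_of_lt ht)
    have h2 : gstat P t ≠ gstat P i := by
      intro hc
      have := F.le_max' t (by simp [hF, hc])
      rw [Fin.le_def] at this
      omega
    omega
  have hblk : ∀ t : Fin y, (i : ℕ) ≤ (t : ℕ) → (t : ℕ) ≤ (k : ℕ) → gstat P t = gstat P i := by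
    intro t h1 h2
    have := gstat_mono P h1
    have := gstat_mono P h2
    omega
  have hjx : gstat P i < x := lt_of_lt_of_le hne (gstat_le B i)
  set jc : Fin x := ⟨gstat P i, hjx⟩ with hjc
  have hjcv : (jc : ℕ) = gstat P i := rfl
  -- P jc = k + 1
  have hPjge : (k : ℕ) + 1 ≤ (P jc : ℕ) := by
    have h1 : ¬ ((jc : ℕ) < gstat P k) := by rw [hk1, hjcv]; omega
    rw [lt_gstat_iff hPm k jc] at h1
    omega
  have hPjle : (P jc : ℕ) ≤ (k : ℕ) + 1 := by
    by_cases hky : (k : ℕ) + 1 < y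
    · have h1 := hk3 ⟨(k : ℕ) + 1, hky⟩ (by simp)
      have h2 : (jc : ℕ) < gstat P ⟨(k : ℕ) + 1, hky⟩ := by rw [hjcv]; omega
      have := (lt_gstat_iff hPm ⟨(k : ℕ) + 1, hky⟩ jc).1 h2
      simpa using this
    · have h1 : (P jc : ℕ) ≤ y := by have := (P jc).2; omega
      have h2 : (k : ℕ) < y := k.2
      omega
  have hPj : (P jc : ℕ) = (k : ℕ) + 1 := le_antisymm hPjle hPjge
  have hiy1 : (i : ℕ) < y + 1 := by have := i.2; omega
  set Q : Fin x → Fin (y+1) := Function.update P jc ⟨(i : ℕ), hiy1⟩ with hQdef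
  have hQval : ∀ j' : Fin x, j' ≠ jc → Q j' = P j' := by
    intro j' h; simp [hQdef, Function.update_of_ne h]
  have hQjc : (Q jc : ℕ) = (i : ℕ) := by simp [hQdef]
  -- Q is monotone
  have hQm : Monotone Q := by
    intro a b hab
    rw [Fin.le_def] at hab ⊢
    rcases eq_or_ne a jc with rfl | ha <;> rcases eq_or_ne b jc with rfl | hb
    · exact le_refl _
    · rw [hQval b hb, hQjc]
      have hba : (jc : ℕ) < (b : ℕ) := by
        have h1 : (jc : ℕ) ≠ (b : ℕ) := fun hc => hb (Fin.ext hc.symm)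
        omega
      have h2 : ¬ ((b : ℕ) < gstat P i) := by rw [← hjcv]; omega
      rw [lt_gstat_iff hPm i b] at h2
      omega
    · rw [hQval a ha, hQjc]
      have hba : (a : ℕ) < (jc : ℕ) := by
        have h1 : (a : ℕ) ≠ (jc : ℕ) := fun hc => ha (Fin.ext hc)
        omega
      have h2 : (a : ℕ) < gstat P i := by rw [← hjcv]; omega
      rw [lt_gstat_iff hPm i a] at h2
      omega
    · rw [hQval a ha, hQval b hb]
      have := hPm (show a ≤ b from by rwa [Fin.le_def])
      rwa [Fin.le_def] at this
  -- Q lies between B and T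
  have hQb : ∀ j', B j' ≤ Q j' ∧ Q j' ≤ T j' := by
    intro j'
    rcases eq_or_ne j' jc with rfl | h
    · constructor
      · rw [Fin.le_def, hQjc]
        have h2 : (jc : ℕ) < gstat B i := by rw [hjcv]; omega
        rw [lt_gstat_iff hB i jc] at h2
        exact h2
      · rw [Fin.le_def, hQjc]
        have h2 := (hPb jc).2
        rw [Fin.le_def] at h2
        omega
    · rw [hQval j' h]; exact hPb j'
  -- gstat of Q
  have hq1 : ∀ t : Fin y, (t : ℕ) < (i : ℕ) → gstat Q t = gstat P t := by
    intro t ht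
    rw [gstat_eq_card, gstat_eq_card]
    congr 1
    apply Finset.filter_congr
    intro j' _
    rcases eq_or_ne j' jc with rfl | h
    · simp only [hQjc, hPj]
      constructor <;> intro hh <;> omega
    · rw [hQval j' h]
  have hq2 : ∀ t : Fin y, (i : ℕ) ≤ (t : ℕ) → (t : ℕ) ≤ (k : ℕ) → gstat Q t = gstat P t + 1 := by
    intro t h1 h2
    rw [gstat_eq_card, gstat_eq_card]
    have heq : (Finset.univ.filter fun j' : Fin x => (Q j' : ℕ) ≤ (t : ℕ))
        = insert jc (Finset.univ.filter fun j' : Fin x => (P j' : ℕ) ≤ (t : ℕ)) := by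
      ext j'
      simp only [mem_filter, mem_univ, true_and, mem_insert]
      rcases eq_or_ne j' jc with rfl | h
      · constructor
        · intro _; exact Or.inl rfl
        · intro _; rw [hQjc]; omega
      · rw [hQval j' h]
        constructor
        · intro hh; exact Or.inr hh
        · rintro (hc | hh)
          · exact absurd hc h
          · exact hh
    rw [heq, Finset.card_insert_of_notMem (by
      simp only [mem_filter, mem_univ, true_and, hPj]
      omega)]
  have hq3 : ∀ t : Fin y, (k : ℕ) < (t : ℕ) → gstat Q t = gstat P t := by
    intro t ht
    rw [gstat_eq_card, gstat_eq_card]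
    congr 1
    apply Finset.filter_congr
    intro j' _
    rcases eq_or_ne j' jc with rfl | h
    · simp only [hQjc, hPj]
      constructor <;> intro hh <;> omega
    · rw [hQval j' h]
  set e : ℕ := gstat P i + (k : ℕ) + 2 with hedef
  have he_notmem : e ∉ Nhat P := by
    rintro ⟨t, ht⟩
    rcases le_or_gt ((t : ℕ)) ((k : ℕ)) with h | h
    · have h2 : gstat P t ≤ gstat P k := gstat_mono P h
      omega
    · have := hk3 t h
      omega
  have he_le : e ≤ x + y := by
    by_cases hky : (k : ℕ) + 1 < y
    · have h1 := hk3 ⟨(k : ℕ) + 1, hky⟩ (by simp)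
      have h2 := gstat_le P ⟨(k : ℕ) + 1, hky⟩
      omega
    · have h1 : (k : ℕ) < y := k.2
      have h2 := gstat_le B i
      omega
  -- Nhat Q is the exchanged basis
  have hNQ : Nhat Q = (Nhat P \ {gstat P i + (i : ℕ) + 1}) ∪ {e} := by
    ext n
    simp only [Nhat, Set.mem_setOf_eq, Set.mem_union, Set.mem_diff, Set.mem_singleton_iff]
    constructor
    · rintro ⟨t, rfl⟩
      rcases lt_or_ge ((t : ℕ)) ((i : ℕ)) with h | h
      · left
        refine ⟨⟨t, by rw [hq1 t h]⟩, ?_⟩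
        rw [hq1 t h]
        have := pos_strictMono P h
        omega
      · rcases lt_or_ge ((k : ℕ)) ((t : ℕ)) with h2 | h2
        · left
          refine ⟨⟨t, by rw [hq3 t h2]⟩, ?_⟩
          rw [hq3 t h2]
          have := pos_strictMono P (show (i : ℕ) < (t : ℕ) from by omega)
          omega
        · -- i ≤ t ≤ k
          rcases eq_or_lt_of_le h2 with h3 | h3
          · right
            rw [hq2 t h h2, hblk t h h2]
            omega
          · left
            have ht1y : (t : ℕ) + 1 < y := lt_of_le_of_lt h3 k.2
            refine ⟨⟨⟨(t : ℕ) + 1, ht1y⟩, ?_⟩, ?_⟩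
            · rw [hq2 t h h2]
              have hb1 := hblk ⟨(t : ℕ) + 1, ht1y⟩ (by simp; omega) (by simp; omega)
              have hb2 := hblk t h h2
              have hcv : ((⟨(t : ℕ) + 1, ht1y⟩ : Fin y) : ℕ) = (t : ℕ) + 1 := rfl
              rw [hb1, hcv, hb2]
              omega
            · rw [hq2 t h h2]
              have hb2 := hblk t h h2
              omega
    · rintro (⟨⟨t, rfl⟩, hne2⟩ | rfl)
      · have hti : (t : ℕ) ≠ (i : ℕ) := by
          intro hc
          apply hne2
          rw [show t = i from Fin.ext hc]
        rcases lt_or_ge ((t : ℕ)) ((i : ℕ)) with h | h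
        · exact ⟨t, by rw [hq1 t h]⟩
        · rcases le_or_gt ((t : ℕ)) ((k : ℕ)) with h2 | h2
          · -- i < t ≤ k : use t - 1
            have hit : (i : ℕ) < (t : ℕ) := by omega
            have hty : (t : ℕ) - 1 < y := by have := t.2; omega
            refine ⟨⟨(t : ℕ) - 1, hty⟩, ?_⟩
            have hg1 := hq2 ⟨(t : ℕ) - 1, hty⟩ (by simp; omega) (by simp; omega)
            have hb1 := hblk ⟨(t : ℕ) - 1, hty⟩ (by simp; omega) (by simp; omega)
            have hb2 := hblk t h h2
            have hcv : ((⟨(t : ℕ) - 1, hty⟩ : Fin y) : ℕ) = (t : ℕ) - 1 := rfl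
            rw [hg1, hb1, hcv, hb2]
            omega
          · exact ⟨t, by rw [hq3 t h2]⟩
      · refine ⟨k, ?_⟩
        rw [hq2 k hk2 (le_refl _), hk1]
        omega
  refine ⟨e, by omega, he_le, he_notmem, by omega, Q, ⟨hQm, hQb⟩, hNQ⟩

lemma aRev (B P : Fin x → Fin (y+1))
    (hPb : ∀ j, (B j : ℕ) ≤ (P j : ℕ)) (i : Fin y) (e : ℕ)
    (he : gstat P i + (i : ℕ) + 1 < e) (Q : Fin x → Fin (y+1))
    (hQb : ∀ j, (B j : ℕ) ≤ (Q j : ℕ))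
    (hNQ : Nhat Q = (Nhat P \ {gstat P i + (i : ℕ) + 1}) ∪ {e}) :
    gstat P i ≠ gstat B i := by
  classical
  intro hc
  have h2 : gstat Q i ≤ gstat B i := gstat_anti hQb i
  have key : ∀ t : Fin y, ∃ t' : Fin y, (t : ℕ) ≤ (i : ℕ) →
      ((t' : ℕ) < (i : ℕ) ∧ gstat P t' + (t' : ℕ) + 1 = gstat Q t + (t : ℕ) + 1) := by
    intro t
    by_cases ht : (t : ℕ) ≤ (i : ℕ)
    · have hmem : (gstat Q t + (t : ℕ) + 1) ∈ Nhat Q := ⟨t, rfl⟩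
      rw [hNQ] at hmem
      have hle : gstat Q t + (t : ℕ) + 1 ≤ gstat P i + (i : ℕ) + 1 := by
        have := gstat_mono Q ht
        omega
      rcases hmem with ⟨⟨t', ht'⟩, hne2⟩ | he2
      · refine ⟨t', fun _ => ⟨?_, ht'⟩⟩
        simp only [Set.mem_singleton_iff] at hne2
        by_contra hcc
        push_neg at hcc
        have := gstat_mono P hcc
        omega
      · simp only [Set.mem_singleton_iff] at he2
        omega
    · exact ⟨t, fun hcc => absurd hcc ht⟩
  choose f hf using key
  have hcard := Finset.card_le_card_of_injOn f
    (s := Finset.univ.filter fun t : Fin y => (t : ℕ) ≤ (i : ℕ))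
    (t := Finset.univ.filter fun t : Fin y => (t : ℕ) < (i : ℕ))
    (fun t ht => by
      simp only [mem_coe, mem_filter, mem_univ, true_and] at ht ⊢
      exact (hf t ht).1)
    (fun a ha b hb hab => by
      simp only [coe_filter, mem_univ, true_and, Set.mem_setOf_eq] at ha hb
      have h1 := (hf a ha).2
      have h2 := (hf b hb).2
      rw [hab] at h1
      exact pos_inj Q (h1.symm.trans h2))
  have hcs : (Finset.univ.filter fun t : Fin y => (t : ℕ) ≤ (i : ℕ)).card = (i : ℕ) + 1 := by
    have heq : (Finset.univ.filter fun t : Fin y => (t : ℕ) ≤ (i : ℕ))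
        = (Finset.univ.filter fun t : Fin y => (t : ℕ) < (i : ℕ) + 1) := by
      apply Finset.filter_congr
      intro t _
      simp [Nat.lt_succ_iff]
    rw [heq]
    exact card_filter_coe_lt y ((i : ℕ) + 1) i.2
  have hct := card_filter_coe_lt y (i : ℕ) (le_of_lt i.2)
  rw [hcs, hct] at hcard
  omega

lemma bFwd (T B P : Fin x → Fin (y+1)) (hT : Monotone T)
    (hPm : Monotone P) (hPb : ∀ j, B j ≤ P j ∧ P j ≤ T j)
    (j : Fin x) (hlt : (P j : ℕ) < (T j : ℕ)) :
    ∃ m : ℕ, m ∈ Nhat P ∧ (j : ℕ) + (P j : ℕ) + 1 < m ∧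
      (Nhat P \ {m}) ∪ {(j : ℕ) + (P j : ℕ) + 1} ∈ LPMBases T B := by
  classical
  have hPjy : (P j : ℕ) < y := by
    have := (T j).2
    omega
  set iP : Fin y := ⟨(P j : ℕ), hPjy⟩ with hiP
  have hiPv : (iP : ℕ) = (P j : ℕ) := rfl
  have hj_lt : (j : ℕ) < gstat P iP := (lt_gstat_iff hPm iP j).2 (le_refl _)
  have hPy1 : (P j : ℕ) + 1 < y + 1 := by omega
  set Q : Fin x → Fin (y+1) := fun j' =>
    if (j : ℕ) ≤ (j' : ℕ) ∧ (j' : ℕ) < gstat P iP then ⟨(P j : ℕ) + 1, hPy1⟩ else P j'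
    with hQdef
  have hQblk : ∀ j' : Fin x, (j : ℕ) ≤ (j' : ℕ) → (j' : ℕ) < gstat P iP →
      (Q j' : ℕ) = (P j : ℕ) + 1 := by
    intro j' h1 h2
    simp only [hQdef, if_pos (And.intro h1 h2)]
  have hQnb : ∀ j' : Fin x, ¬ ((j : ℕ) ≤ (j' : ℕ) ∧ (j' : ℕ) < gstat P iP) → Q j' = P j' := by
    intro j' h
    simp only [hQdef, if_neg h]
  have hPblk : ∀ j' : Fin x, (j : ℕ) ≤ (j' : ℕ) → (j' : ℕ) < gstat P iP →
      (P j' : ℕ) = (P j : ℕ) := by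
    intro j' h1 h2
    have hle := (lt_gstat_iff hPm iP j').1 h2
    have hge := hPm (show j ≤ j' from by rwa [Fin.le_def])
    rw [Fin.le_def] at hge
    omega
  have hQm : Monotone Q := by
    intro a b hab
    rw [Fin.le_def] at hab ⊢
    by_cases hba : (j : ℕ) ≤ (a : ℕ) ∧ (a : ℕ) < gstat P iP <;>
      by_cases hbb : (j : ℕ) ≤ (b : ℕ) ∧ (b : ℕ) < gstat P iP
    · rw [hQblk a hba.1 hba.2, hQblk b hbb.1 hbb.2]
    · rw [hQblk a hba.1 hba.2, hQnb b hbb]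
      have hbge : gstat P iP ≤ (b : ℕ) := by omega
      have : ¬ ((b : ℕ) < gstat P iP) := by omega
      rw [lt_gstat_iff hPm iP b] at this
      omega
    · rw [hQnb a hba, hQblk b hbb.1 hbb.2]
      have haj : (a : ℕ) < (j : ℕ) := by omega
      have := hPm (show a ≤ j from by rw [Fin.le_def]; omega)
      rw [Fin.le_def] at this
      omega
    · rw [hQnb a hba, hQnb b hbb]
      have := hPm (show a ≤ b from by rwa [Fin.le_def])
      rwa [Fin.le_def] at this
  have hQb : ∀ j', B j' ≤ Q j' ∧ Q j' ≤ T j' := by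
    intro j'
    by_cases hb : (j : ℕ) ≤ (j' : ℕ) ∧ (j' : ℕ) < gstat P iP
    · constructor
      · rw [Fin.le_def, hQblk j' hb.1 hb.2]
        have := (hPb j').1
        rw [Fin.le_def] at this
        have := hPblk j' hb.1 hb.2
        omega
      · rw [Fin.le_def, hQblk j' hb.1 hb.2]
        have h1 := hT (show j ≤ j' from by rw [Fin.le_def]; exact hb.1)
        rw [Fin.le_def] at h1
        omega
    · rw [hQnb j' hb]
      exact hPb j'
  have hq1 : ∀ t : Fin y, (t : ℕ) ≠ (P j : ℕ) → gstat Q t = gstat P t := by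
    intro t ht
    rw [gstat_eq_card, gstat_eq_card]
    congr 1
    apply Finset.filter_congr
    intro j' _
    by_cases hb : (j : ℕ) ≤ (j' : ℕ) ∧ (j' : ℕ) < gstat P iP
    · rw [hQblk j' hb.1 hb.2]
      have := hPblk j' hb.1 hb.2
      constructor <;> intro hh <;> omega
    · rw [hQnb j' hb]
  have hq2 : gstat Q iP = (j : ℕ) := by
    rw [gstat_eq_card]
    have heq : (Finset.univ.filter fun j' : Fin x => (Q j' : ℕ) ≤ (iP : ℕ))
        = Finset.univ.filter fun j' : Fin x => (j' : ℕ) < (j : ℕ) := by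
      apply Finset.filter_congr
      intro j' _
      by_cases hb : (j : ℕ) ≤ (j' : ℕ) ∧ (j' : ℕ) < gstat P iP
      · rw [hQblk j' hb.1 hb.2]
        constructor <;> intro hh <;> omega
      · rw [hQnb j' hb]
        constructor
        · intro hh
          have := (lt_gstat_iff hPm iP j').2 hh
          omega
        · intro hh
          have : (j' : ℕ) < gstat P iP := by omega
          exact (lt_gstat_iff hPm iP j').1 this
    rw [heq, card_filter_coe_lt x (j : ℕ) (le_of_lt j.2)]
  refine ⟨gstat P iP + (P j : ℕ) + 1, ⟨iP, rfl⟩, by omega, Q, ⟨hQm, hQb⟩, ?_⟩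
  ext n
  simp only [Nhat, Set.mem_setOf_eq, Set.mem_union, Set.mem_diff, Set.mem_singleton_iff]
  constructor
  · rintro ⟨t, rfl⟩
    rcases eq_or_ne ((t : ℕ)) ((iP : ℕ)) with h | h
    · right
      have : t = iP := Fin.ext h
      rw [this, hq2]
    · left
      refine ⟨⟨t, by rw [hq1 t h]⟩, ?_⟩
      rw [hq1 t h]
      intro hc
      exact h (Fin.ext_iff.1 (pos_inj P hc))
  · rintro (⟨⟨t, rfl⟩, hne2⟩ | rfl)
    · have ht : (t : ℕ) ≠ (iP : ℕ) := by
        intro hcc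
        exact hne2 (by rw [show t = iP from Fin.ext hcc])
      exact ⟨t, by rw [hq1 t ht]⟩
    · exact ⟨iP, by rw [hq2]⟩

lemma bRev (T P : Fin x → Fin (y+1)) (hT : Monotone T)
    (hPm : Monotone P) (hPT : ∀ j', (P j' : ℕ) ≤ (T j' : ℕ))
    (j : Fin x) (m : ℕ) (hm : m ∈ Nhat P) (hcm : (j : ℕ) + (P j : ℕ) + 1 < m)
    (Q : Fin x → Fin (y+1)) (hQT : ∀ j', (Q j' : ℕ) ≤ (T j' : ℕ))
    (hNQ : Nhat Q = (Nhat P \ {m}) ∪ {(j : ℕ) + (P j : ℕ) + 1}) :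
    P j ≠ T j := by
  classical
  set c : ℕ := (j : ℕ) + (P j : ℕ) + 1 with hcdef
  -- small north steps of P lie strictly left of c
  have hsmall : ∀ t : Fin y, (t : ℕ) < (P j : ℕ) → gstat P t + (t : ℕ) + 1 < c := by
    intro t ht
    have hg : gstat P t ≤ (j : ℕ) := by
      rw [gstat_eq_card]
      have hsub : (Finset.univ.filter fun j' : Fin x => (P j' : ℕ) ≤ (t : ℕ))
          ⊆ Finset.univ.filter fun j' : Fin x => (j' : ℕ) < (j : ℕ) := by
        intro j' hj'
        simp only [mem_filter, mem_univ, true_and] at hj' ⊢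
        by_contra hcc
        push_neg at hcc
        have := hPm (show j ≤ j' from by rwa [Fin.le_def])
        rw [Fin.le_def] at this
        omega
      have := Finset.card_le_card hsub
      rwa [card_filter_coe_lt x (j : ℕ) (le_of_lt j.2)] at this
    omega
  have hPjy : (P j : ℕ) < y := by
    by_contra hcc
    push_neg at hcc
    obtain ⟨t, ht⟩ := hm
    have h1 := hsmall t (by have := t.2; omega)
    omega
  set iP : Fin y := ⟨(P j : ℕ), hPjy⟩ with hiP
  haveI : Nonempty (Fin y) := ⟨iP⟩
  -- key : gstat Q iP ≤ j
  have hkey : gstat Q iP ≤ (j : ℕ) := by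
    by_contra hcc
    push_neg at hcc
    have hcq : c < gstat Q iP + (iP : ℕ) + 1 := by
      have : (iP : ℕ) = (P j : ℕ) := rfl
      omega
    set S : Finset ℕ := insert c ((Finset.univ.filter fun t : Fin y =>
      (t : ℕ) < (P j : ℕ)).image fun t => gstat P t + (t : ℕ) + 1) with hSdef
    have hkey1 : ∀ z : ℕ, ∃ t : Fin y, z ∈ S →
        ((t : ℕ) < (P j : ℕ) ∧ gstat Q t + (t : ℕ) + 1 = z) := by
      intro z
      by_cases hz : z ∈ S
      · have hzQ : z ∈ Nhat Q ∧ z ≤ c := by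
          simp only [hSdef, mem_insert, mem_image, mem_filter, mem_univ, true_and] at hz
          rcases hz with rfl | ⟨t, ht1, rfl⟩
          · exact ⟨by rw [hNQ]; exact Or.inr rfl, le_refl _⟩
          · have h1 := hsmall t ht1
            refine ⟨by rw [hNQ]; exact Or.inl ⟨⟨t, rfl⟩, by simp; omega⟩, by omega⟩
        obtain ⟨⟨t, ht⟩, hzc⟩ := hzQ
        refine ⟨t, fun _ => ⟨?_, ht⟩⟩
        by_contra hcc2
        push_neg at hcc2
        have := gstat_mono Q (show (iP : ℕ) ≤ (t : ℕ) from hcc2)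
        omega
      · exact ⟨iP, fun hzz => absurd hzz hz⟩
    choose f hf using hkey1
    have hcard := Finset.card_le_card_of_injOn f
      (s := S) (t := Finset.univ.filter fun t : Fin y => (t : ℕ) < (P j : ℕ))
      (fun z hz => by
        simp only [mem_coe, mem_filter, mem_univ, true_and]
        exact (hf z hz).1)
      (fun a ha b hb hab => by
        have h1 := (hf a ha).2
        have h2 := (hf b hb).2
        rw [hab] at h1
        exact h1.symm.trans h2)
    have hcS : S.card = (P j : ℕ) + 1 := by
      rw [hSdef, Finset.card_insert_of_notMem, Finset.card_image_of_injOn,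
        card_filter_coe_lt y (P j : ℕ) (le_of_lt hPjy)]
      · intro a ha b hb hab
        simp only [coe_filter, mem_univ, true_and, Set.mem_setOf_eq] at ha hb
        exact pos_inj P hab
      · simp only [mem_image, mem_filter, mem_univ, true_and]
        rintro ⟨t, ht1, ht2⟩
        have := hsmall t ht1
        omega
    rw [hcS, card_filter_coe_lt y (P j : ℕ) (le_of_lt hPjy)] at hcard
    omega
  intro hc
  have h1 : gstat T iP ≤ gstat Q iP := gstat_anti hQT iP
  have h2 : (j : ℕ) < gstat T iP := by
    apply (lt_gstat_iff hT iP j).2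
    rw [← hc]
  omega

/-- With respect to the reversed order on the ground set `{1,…,x+y}` of the
lattice path matroid, the internally active elements of the basis `N̂(P)` are
exactly the right contacts of `P`, and the externally active elements are
exactly the top contacts of `P`. -/
theorem stmt18 {x y : ℕ} (T B : Fin x → Fin (y+1))
    (hT : Monotone T) (hB : Monotone B) (hTB : ∀ j, B j ≤ T j)
    (P : Fin x → Fin (y+1)) (hP : InP T B P) :
    (∀ i : Fin y,
      ((∃ e : ℕ, 1 ≤ e ∧ e ≤ x + y ∧ e ∉ Nhat P ∧ gstat P i + (i : ℕ) + 1 < e ∧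
          (Nhat P \ {gstat P i + (i : ℕ) + 1}) ∪ {e} ∈ LPMBases T B)
        ↔ gstat P i ≠ gstat B i)) ∧
    (∀ j : Fin x,
      ((∃ m : ℕ, m ∈ Nhat P ∧ (j : ℕ) + (P j : ℕ) + 1 < m ∧
          (Nhat P \ {m}) ∪ {(j : ℕ) + (P j : ℕ) + 1} ∈ LPMBases T B)
        ↔ P j ≠ T j)) := by
  obtain ⟨hPm, hPb⟩ := hP
  constructor
  · intro i
    constructor
    · rintro ⟨e, -, -, -, he, Q, ⟨hQm, hQb⟩, hNQ⟩
      exact aRev B P (fun j => by have := (hPb j).1; rwa [Fin.le_def] at this) i e he Q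
        (fun j => by have := (hQb j).1; rwa [Fin.le_def] at this) hNQ
    · intro hne
      have h1 : gstat P i ≤ gstat B i :=
        gstat_anti (fun j => by have := (hPb j).1; rwa [Fin.le_def] at this) i
      exact aFwd T B hB P hPm hPb i (lt_of_le_of_ne h1 hne)
  · intro j
    constructor
    · rintro ⟨m, hm, hcm, Q, ⟨hQm, hQb⟩, hNQ⟩
      exact bRev T P hT hPm (fun j' => by have := (hPb j').2; rwa [Fin.le_def] at this)
        j m hm hcm Q (fun j' => by have := (hQb j').2; rwa [Fin.le_def] at this) hNQ
    · intro hne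
      have h1 : (P j : ℕ) ≤ (T j : ℕ) := by have := (hPb j).2; rwa [Fin.le_def] at this
      have h2 : (P j : ℕ) ≠ (T j : ℕ) := fun hc => hne (Fin.ext hc)
      exact bFwd T B P hT hPm hPb j (lt_of_le_of_ne h1 h2)
end
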